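/- arXiv:2101.01420 — 6 statements merged into one kernel-verified Lean document; each statement's English description precedes it below -/
import Mathlib

section
/- Let q1, q2, u, v be nonzero complex numbers and let λ, μ be partitions. Assume that 1 − χ_□(u)/χ_■(v) ≠ 0 and 1 − q1·q2·χ_□(u)/χ_■(v) ≠ 0 for all cells □ ∈ λ and ■ ∈ μ. Then ∏_{□∈λ, ■∈μ} [ (1 − q1·χ_□(u)/χ_■(v))·(1 − q2·χ_□(u)/χ_■(v)) ] / [ (1 − χ_□(u)/χ_■(v))·(1 − q1·q2·χ_□(u)/χ_■(v)) ] · ∏_{□∈λ} (1 − q1·q2·χ_□(u)/v) · ∏_{■∈μ} (1 − u/χ_■(v)) = ∏_{□∈λ} (1 − q1^{−ℓ_μ(□)}·q2^{a_λ(□)+1}·u/v) · ∏_{■∈μ} (1 − q1^{ℓ_λ(■)+1}·q2^{−a_μ(■)}·u/v). (Both sides equal the K-theoretic Nekrasov factor N_{λμ}(u,v).) -/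
open Complex

/-- The set of cells of a partition (1-based indexing): `(i,j)` with `i,j ≥ 1` and `j ≤ λ_i`. -/
def cellsOf (lam : ℕ → ℕ) : Set (ℕ × ℕ) :=
  {s | 1 ≤ s.1 ∧ 1 ≤ s.2 ∧ s.2 ≤ lam s.1}

/-- The transpose partition: `λ^∨_j := #{ i ≥ 1 : λ_i ≥ j }`. -/
noncomputable def conjOf (lam : ℕ → ℕ) (j : ℕ) : ℕ :=
  Nat.card {i : ℕ // 1 ≤ i ∧ j ≤ lam i}

/-- The arm length `a_λ(i,j) = λ_i - j` (as an integer, possibly negative). -/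
def armOf (lam : ℕ → ℕ) (s : ℕ × ℕ) : ℤ := (lam s.1 : ℤ) - s.2

/-- The leg length `ℓ_λ(i,j) = λ^∨_j - i` (as an integer, possibly negative). -/
noncomputable def legOf (lam : ℕ → ℕ) (s : ℕ × ℕ) : ℤ := (conjOf lam s.2 : ℤ) - s.1

/-- The weight `χ_{(i,j)}(u) = u q1^{i-1} q2^{j-1}`. -/
noncomputable def chiOf (q1 q2 u : ℂ) (s : ℕ × ℕ) : ℂ :=
  u * q1 ^ ((s.1 : ℤ) - 1) * q2 ^ ((s.2 : ℤ) - 1)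

open Finset

variable {M : Type*} [AddCommGroup M]

lemma nek_sum_reflect (F : ℕ → M) (n : ℕ) :
    ∑ j ∈ Icc 1 n, F j = ∑ j ∈ Icc 1 n, F (n + 1 - j) := by
  apply Finset.sum_nbij' (fun j => n + 1 - j) (fun j => n + 1 - j) <;>
    intro a ha <;> simp only [mem_Icc] at * <;> first | omega | (congr 1; omega)

lemma nek_telescope_down (σ : ℤ → M) (i : ℤ) (c : ℕ) :
    σ (i - c) = σ i + ∑ k ∈ Icc 1 c, (σ (i - k) - σ (i - k + 1)) := by
  induction c with
  | zero => simp
  | succ c ih =>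
    rw [Finset.sum_Icc_succ_top (by omega : 1 ≤ c + 1), ← add_assoc, ← ih]
    have e2 : i - ((c:ℤ) + 1) + 1 = i - c := by ring
    have e3 : i - ((c + 1 : ℕ) : ℤ) = i - ((c:ℤ) + 1) := by push_cast; ring
    rw [e3, e2]
    abel

lemma nek_telescope_up (σ : ℤ → M) (z : ℤ) (c : ℕ) :
    σ (z + c) = σ z + ∑ k ∈ Icc 1 c, (σ (z + k) - σ (z + k - 1)) := by
  induction c with
  | zero => simp
  | succ c ih =>
    rw [Finset.sum_Icc_succ_top (by omega : 1 ≤ c + 1), ← add_assoc, ← ih]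
    have e2 : z + ((c:ℤ) + 1) - 1 = z + c := by ring
    have e3 : z + ((c + 1 : ℕ) : ℤ) = z + ((c:ℤ) + 1) := by push_cast; ring
    rw [e3, e2]
    abel

lemma nek_key_one (τ : ℤ → M) (a b : ℕ) :
    ∑ j ∈ Icc 1 a, ∑ l ∈ Icc 1 b, (τ ((j:ℤ) - l + 1) - τ ((j:ℤ) - l))
      = ∑ j ∈ Icc 1 (min a b), τ ((a:ℤ) + 1 - j)
        - ∑ l ∈ Icc 1 (min a b), τ ((l:ℤ) - b) := by
  have inner : ∀ j : ℕ, ∑ l ∈ Icc 1 b, (τ ((j:ℤ) - l + 1) - τ ((j:ℤ) - l))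
      = τ (j:ℤ) - τ ((j:ℤ) - b) := by
    intro j
    have h := nek_telescope_down τ (j:ℤ) b
    have h2 : ∑ l ∈ Icc 1 b, (τ ((j:ℤ) - l + 1) - τ ((j:ℤ) - l))
        = -∑ l ∈ Icc 1 b, (τ ((j:ℤ) - l) - τ ((j:ℤ) - l + 1)) := by
      rw [← Finset.sum_neg_distrib]
      exact Finset.sum_congr rfl fun l _ => by abel
    rw [h2, show ∑ l ∈ Icc 1 b, (τ ((j:ℤ) - l) - τ ((j:ℤ) - l + 1))
        = τ ((j:ℤ) - b) - τ (j:ℤ) from by rw [eq_sub_iff_add_eq, add_comm, ← h]]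
    abel
  simp only [inner]
  rw [Finset.sum_sub_distrib]
  rcases le_or_gt a b with hab | hab
  · rw [min_eq_left hab]
    congr 1
    rw [nek_sum_reflect (fun j => τ ((a:ℤ) + 1 - j)) a]
    refine Finset.sum_congr rfl fun j hj => ?_
    simp only [mem_Icc] at hj
    congr 1; omega
  · rw [min_eq_right hab.le]
    have icc1 : ∀ n : ℕ, Icc 1 n = Ioc 0 n := fun n => Finset.Icc_add_one_left_eq_Ioc 0 n
    have X1 : ∑ j ∈ Icc 1 a, τ (j:ℤ)
        = ∑ j ∈ Icc 1 (a-b), τ (j:ℤ) + ∑ j ∈ Ioc (a-b) a, τ (j:ℤ) := by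
      rw [icc1 a, icc1 (a-b),
        Finset.sum_Ioc_consecutive _ (by omega : 0 ≤ a - b) (by omega : a - b ≤ a)]
    have X2 : ∑ j ∈ Icc 1 a, τ ((j:ℤ) - b)
        = ∑ j ∈ Icc 1 b, τ ((j:ℤ) - b) + ∑ j ∈ Icc 1 (a-b), τ (j:ℤ) := by
      rw [icc1 a, ← Finset.sum_Ioc_consecutive (fun j => τ ((j:ℤ) - b)) (by omega : 0 ≤ b) (by omega : b ≤ a)]
      rw [← icc1 b]
      congr 1
      apply Finset.sum_nbij' (fun j => j - b) (fun j => j + b) <;>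
          intro x hx <;> simp only [Finset.mem_Ioc, Finset.mem_Icc] at * <;>
          first | omega | (congr 1; omega)
    have R1 : ∑ j ∈ Icc 1 b, τ ((a:ℤ) + 1 - j) = ∑ j ∈ Ioc (a-b) a, τ (j:ℤ) := by
      apply Finset.sum_nbij' (fun j => a + 1 - j) (fun j => a + 1 - j) <;>
        intro x hx <;> simp only [Finset.mem_Ioc, Finset.mem_Icc] at * <;>
        first | omega | (congr 1; omega)
    rw [X1, X2, R1]
    abel

lemma nek_key_ab (σ : ℤ → ℤ → M) (p : ℤ) (a b : ℕ) :
    ∑ j ∈ Icc 1 a, ∑ l ∈ Icc 1 b,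
        (σ (p+1) ((j:ℤ) - l) + σ p ((j:ℤ) - l + 1)
          - σ p ((j:ℤ) - l) - σ (p+1) ((j:ℤ) - l + 1))
      = ∑ j ∈ Icc 1 (min a b), (σ p ((a:ℤ) + 1 - j) - σ (p+1) ((a:ℤ) + 1 - j))
        + ∑ l ∈ Icc 1 (min a b), (σ (p+1) ((l:ℤ) - b) - σ p ((l:ℤ) - b)) := by
  have lhs : ∑ j ∈ Icc 1 a, ∑ l ∈ Icc 1 b,
        (σ (p+1) ((j:ℤ) - l) + σ p ((j:ℤ) - l + 1)
          - σ p ((j:ℤ) - l) - σ (p+1) ((j:ℤ) - l + 1))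
      = (∑ j ∈ Icc 1 a, ∑ l ∈ Icc 1 b, (σ p ((j:ℤ) - l + 1) - σ p ((j:ℤ) - l)))
        - ∑ j ∈ Icc 1 a, ∑ l ∈ Icc 1 b, (σ (p+1) ((j:ℤ) - l + 1) - σ (p+1) ((j:ℤ) - l)) := by
    rw [← Finset.sum_sub_distrib]
    refine Finset.sum_congr rfl fun j _ => ?_
    rw [← Finset.sum_sub_distrib]
    exact Finset.sum_congr rfl fun l _ => by abel
  rw [lhs, nek_key_one (σ p) a b, nek_key_one (σ (p+1)) a b,
    Finset.sum_sub_distrib, Finset.sum_sub_distrib]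
  abel

section conj

variable (mu : ℕ → ℕ) (N : ℕ)
  (hmu1 : ∀ i j, 1 ≤ i → i ≤ j → mu j ≤ mu i)
  (hN : ∀ i, N ≤ i → mu i = 0)

include hN in
lemma nek_conj_eq_card (j : ℕ) (hj : 1 ≤ j) :
    conjOf mu j = ((Icc 1 N).filter (fun k => j ≤ mu k)).card := by
  have hset : {i : ℕ | 1 ≤ i ∧ j ≤ mu i}
      = ↑((Icc 1 N).filter (fun k => j ≤ mu k)) := by
    ext i
    simp only [Set.mem_setOf_eq, Finset.coe_filter, Finset.mem_Icc]
    constructor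
    · rintro ⟨h1, h2⟩
      refine ⟨⟨h1, ?_⟩, h2⟩
      by_contra hc
      have := hN i (by omega)
      omega
    · rintro ⟨⟨h1, _⟩, h2⟩; exact ⟨h1, h2⟩
  show Nat.card ↥{i : ℕ | 1 ≤ i ∧ j ≤ mu i} = _
  rw [Nat.card_coe_set_eq, hset, Set.ncard_coe_finset]

include hmu1 hN in
lemma nek_conj_iff (j k : ℕ) (hj : 1 ≤ j) (hk : 1 ≤ k) :
    k ≤ conjOf mu j ↔ j ≤ mu k := by
  rw [nek_conj_eq_card mu N hN j hj]
  constructor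
  · intro h
    by_contra hc
    push_neg at hc
    have hsub : (Icc 1 N).filter (fun k => j ≤ mu k) ⊆ Icc 1 (k-1) := by
      intro i hi
      simp only [Finset.mem_filter, Finset.mem_Icc] at hi ⊢
      refine ⟨hi.1.1, ?_⟩
      by_contra hik
      have := hmu1 k i hk (by omega)
      omega
    have := Finset.card_le_card hsub
    rw [Nat.card_Icc] at this
    omega
  · intro h
    have hkN : k ≤ N := by
      by_contra hc
      have := hN k (by omega)
      omega
    have hsub : Icc 1 k ⊆ (Icc 1 N).filter (fun k => j ≤ mu k) := by
      intro i hi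
      simp only [Finset.mem_filter, Finset.mem_Icc] at hi ⊢
      exact ⟨⟨hi.1, le_trans hi.2 hkN⟩, le_trans h (hmu1 i k hi.1 hi.2)⟩
    have := Finset.card_le_card hsub
    rw [Nat.card_Icc] at this
    omega

include hN in
lemma nek_conj_le (j : ℕ) (hj : 1 ≤ j) : conjOf mu j ≤ N := by
  rw [nek_conj_eq_card mu N hN j hj]
  calc ((Icc 1 N).filter (fun k => j ≤ mu k)).card ≤ (Icc 1 N).card :=
        Finset.card_filter_le _ _
    _ = N := by rw [Nat.card_Icc]; omega

include hmu1 hN in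
lemma nek_filter_eq (j : ℕ) (hj : 1 ≤ j) :
    (Icc 1 N).filter (fun k => j ≤ mu k) = Icc 1 (conjOf mu j) := by
  ext k
  simp only [Finset.mem_filter, Finset.mem_Icc]
  constructor
  · rintro ⟨⟨h1, h2⟩, h3⟩
    exact ⟨h1, (nek_conj_iff mu N hmu1 hN j k hj h1).2 h3⟩
  · rintro ⟨h1, h2⟩
    refine ⟨⟨h1, le_trans h2 (nek_conj_le mu N hN j hj)⟩,
      (nek_conj_iff mu N hmu1 hN j k hj h1).1 h2⟩

end conj

section core

variable (lam mu : ℕ → ℕ) (N : ℕ)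
  (hlam1 : ∀ i j, 1 ≤ i → i ≤ j → lam j ≤ lam i)
  (hlamN : ∀ i, N ≤ i → lam i = 0)
  (hmu1 : ∀ i j, 1 ≤ i → i ≤ j → mu j ≤ mu i)
  (hmuN : ∀ i, N ≤ i → mu i = 0)

include hmu1 hmuN in
lemma nek_A (σ : ℤ → ℤ → M) :
    ∑ i ∈ Icc 1 N, ∑ j ∈ Icc 1 (lam i),
        σ ((i:ℤ) - conjOf mu j) ((lam i : ℤ) - j + 1)
      = (∑ i ∈ Icc 1 N, ∑ j ∈ Icc 1 (lam i), σ (i:ℤ) (j:ℤ))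
        + ∑ i ∈ Icc 1 N, ∑ k ∈ Icc 1 N, ∑ j ∈ Icc 1 (min (lam i) (mu k)),
            (σ ((i:ℤ)-k) ((lam i:ℤ)+1-j) - σ ((i:ℤ)-k+1) ((lam i:ℤ)+1-j)) := by
  have step1 : ∀ i ∈ Icc 1 N, ∑ j ∈ Icc 1 (lam i),
        σ ((i:ℤ) - conjOf mu j) ((lam i : ℤ) - j + 1)
      = ∑ j ∈ Icc 1 (lam i), (σ (i:ℤ) ((lam i:ℤ) - j + 1)
          + ∑ k ∈ Icc 1 N, (if j ≤ mu k then
              (σ ((i:ℤ)-k) ((lam i:ℤ) - j + 1) - σ ((i:ℤ)-k+1) ((lam i:ℤ) - j + 1))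
            else 0)) := by
    intro i _
    refine Finset.sum_congr rfl fun j hj => ?_
    simp only [Finset.mem_Icc] at hj
    rw [nek_telescope_down (fun z => σ z ((lam i:ℤ) - j + 1)) (i:ℤ) (conjOf mu j),
      ← nek_filter_eq mu N hmu1 hmuN j hj.1, Finset.sum_filter]
  rw [Finset.sum_congr rfl step1]
  have split : ∀ i ∈ Icc 1 N, ∑ j ∈ Icc 1 (lam i), (σ (i:ℤ) ((lam i:ℤ) - j + 1)
          + ∑ k ∈ Icc 1 N, (if j ≤ mu k then
              (σ ((i:ℤ)-k) ((lam i:ℤ) - j + 1) - σ ((i:ℤ)-k+1) ((lam i:ℤ) - j + 1))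
            else 0))
      = (∑ j ∈ Icc 1 (lam i), σ (i:ℤ) (j:ℤ))
        + ∑ k ∈ Icc 1 N, ∑ j ∈ Icc 1 (min (lam i) (mu k)),
            (σ ((i:ℤ)-k) ((lam i:ℤ)+1-j) - σ ((i:ℤ)-k+1) ((lam i:ℤ)+1-j)) := by
    intro i _
    rw [Finset.sum_add_distrib]
    congr 1
    · rw [nek_sum_reflect (fun j => σ (i:ℤ) ((lam i:ℤ) - j + 1)) (lam i)]
      refine Finset.sum_congr rfl fun j hj => ?_
      simp only [Finset.mem_Icc] at hj
      congr 1
      omega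
    · rw [Finset.sum_comm]
      refine Finset.sum_congr rfl fun k _ => ?_
      rw [← Finset.sum_filter,
        show (Icc 1 (lam i)).filter (fun j => j ≤ mu k)
            = Icc 1 (min (lam i) (mu k)) from by
          ext j; simp only [Finset.mem_filter, Finset.mem_Icc]; omega]
      refine Finset.sum_congr rfl fun j hj => ?_
      simp only [Finset.mem_Icc] at hj
      congr 2 <;> omega
  rw [Finset.sum_congr rfl split, Finset.sum_add_distrib]

include hlam1 hlamN in
lemma nek_B (σ : ℤ → ℤ → M) :
    ∑ k ∈ Icc 1 N, ∑ l ∈ Icc 1 (mu k),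
        σ ((conjOf lam l : ℤ) + 1 - k) ((l:ℤ) - mu k)
      = (∑ k ∈ Icc 1 N, ∑ l ∈ Icc 1 (mu k), σ (1 - (k:ℤ)) (1 - (l:ℤ)))
        + ∑ i ∈ Icc 1 N, ∑ k ∈ Icc 1 N, ∑ l ∈ Icc 1 (min (lam i) (mu k)),
            (σ ((i:ℤ)-k+1) ((l:ℤ) - mu k) - σ ((i:ℤ)-k) ((l:ℤ) - mu k)) := by
  have step1 : ∀ k ∈ Icc 1 N, ∑ l ∈ Icc 1 (mu k),
        σ ((conjOf lam l : ℤ) + 1 - k) ((l:ℤ) - mu k)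
      = ∑ l ∈ Icc 1 (mu k), (σ (1 - (k:ℤ)) ((l:ℤ) - mu k)
          + ∑ i ∈ Icc 1 N, (if l ≤ lam i then
              (σ ((i:ℤ)-k+1) ((l:ℤ) - mu k) - σ ((i:ℤ)-k) ((l:ℤ) - mu k))
            else 0)) := by
    intro k _
    refine Finset.sum_congr rfl fun l hl => ?_
    simp only [Finset.mem_Icc] at hl
    have e : (conjOf lam l : ℤ) + 1 - k = (1 - (k:ℤ)) + conjOf lam l := by ring
    rw [e, nek_telescope_up (fun z => σ z ((l:ℤ) - mu k)) (1 - (k:ℤ)) (conjOf lam l),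
      ← nek_filter_eq lam N hlam1 hlamN l hl.1, Finset.sum_filter]
    congr 1
    refine Finset.sum_congr rfl fun i hi => ?_
    congr 2 <;> ring
  rw [Finset.sum_congr rfl step1]
  have split : ∀ k ∈ Icc 1 N, ∑ l ∈ Icc 1 (mu k), (σ (1 - (k:ℤ)) ((l:ℤ) - mu k)
          + ∑ i ∈ Icc 1 N, (if l ≤ lam i then
              (σ ((i:ℤ)-k+1) ((l:ℤ) - mu k) - σ ((i:ℤ)-k) ((l:ℤ) - mu k))
            else 0))
      = (∑ l ∈ Icc 1 (mu k), σ (1 - (k:ℤ)) (1 - (l:ℤ)))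
        + ∑ i ∈ Icc 1 N, ∑ l ∈ Icc 1 (min (lam i) (mu k)),
            (σ ((i:ℤ)-k+1) ((l:ℤ) - mu k) - σ ((i:ℤ)-k) ((l:ℤ) - mu k)) := by
    intro k _
    rw [Finset.sum_add_distrib]
    congr 1
    · rw [nek_sum_reflect (fun l => σ (1 - (k:ℤ)) ((l:ℤ) - mu k)) (mu k)]
      refine Finset.sum_congr rfl fun l hl => ?_
      simp only [Finset.mem_Icc] at hl
      congr 1
      omega
    · rw [Finset.sum_comm]
      refine Finset.sum_congr rfl fun i _ => ?_
      rw [← Finset.sum_filter,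
        show (Icc 1 (mu k)).filter (fun l => l ≤ lam i)
            = Icc 1 (min (lam i) (mu k)) from by
          ext l; simp only [Finset.mem_filter, Finset.mem_Icc]; omega]
  rw [Finset.sum_congr rfl split, Finset.sum_add_distrib, Finset.sum_comm (s := Icc 1 N)]

include hlam1 hlamN hmu1 hmuN in
lemma nek_core (σ : ℤ → ℤ → M) :
    (∑ i ∈ Icc 1 N, ∑ k ∈ Icc 1 N, ∑ j ∈ Icc 1 (lam i), ∑ l ∈ Icc 1 (mu k),
        (σ ((i:ℤ)-k+1) ((j:ℤ)-l) + σ ((i:ℤ)-k) ((j:ℤ)-l+1)))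
      + (∑ i ∈ Icc 1 N, ∑ j ∈ Icc 1 (lam i), σ (i:ℤ) (j:ℤ))
      + (∑ k ∈ Icc 1 N, ∑ l ∈ Icc 1 (mu k), σ (1 - (k:ℤ)) (1 - (l:ℤ)))
    = (∑ i ∈ Icc 1 N, ∑ k ∈ Icc 1 N, ∑ j ∈ Icc 1 (lam i), ∑ l ∈ Icc 1 (mu k),
        (σ ((i:ℤ)-k) ((j:ℤ)-l) + σ ((i:ℤ)-k+1) ((j:ℤ)-l+1)))
      + (∑ i ∈ Icc 1 N, ∑ j ∈ Icc 1 (lam i),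
          σ ((i:ℤ) - conjOf mu j) ((lam i : ℤ) - j + 1))
      + (∑ k ∈ Icc 1 N, ∑ l ∈ Icc 1 (mu k),
          σ ((conjOf lam l : ℤ) + 1 - k) ((l:ℤ) - mu k)) := by
  rw [nek_A lam mu N hmu1 hmuN σ, nek_B lam mu N hlam1 hlamN σ]
  have h2 : ∑ i ∈ Icc 1 N, ∑ k ∈ Icc 1 N, ∑ j ∈ Icc 1 (lam i), ∑ l ∈ Icc 1 (mu k),
        (σ ((i:ℤ)-k+1) ((j:ℤ)-l) + σ ((i:ℤ)-k) ((j:ℤ)-l+1))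
      = (∑ i ∈ Icc 1 N, ∑ k ∈ Icc 1 N, ∑ j ∈ Icc 1 (lam i), ∑ l ∈ Icc 1 (mu k),
          (σ ((i:ℤ)-k) ((j:ℤ)-l) + σ ((i:ℤ)-k+1) ((j:ℤ)-l+1)))
        + ∑ i ∈ Icc 1 N, ∑ k ∈ Icc 1 N,
            ((∑ j ∈ Icc 1 (min (lam i) (mu k)),
              (σ ((i:ℤ)-k) ((lam i:ℤ)+1-j) - σ ((i:ℤ)-k+1) ((lam i:ℤ)+1-j)))
            + ∑ l ∈ Icc 1 (min (lam i) (mu k)),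
              (σ ((i:ℤ)-k+1) ((l:ℤ) - mu k) - σ ((i:ℤ)-k) ((l:ℤ) - mu k))) := by
    rw [← Finset.sum_add_distrib]
    refine Finset.sum_congr rfl fun i _ => ?_
    rw [← Finset.sum_add_distrib]
    refine Finset.sum_congr rfl fun k _ => ?_
    have hk := nek_key_ab σ ((i:ℤ)-k) (lam i) (mu k)
    have expand : ∑ j ∈ Icc 1 (lam i), ∑ l ∈ Icc 1 (mu k),
          (σ ((i:ℤ)-k+1) ((j:ℤ)-l) + σ ((i:ℤ)-k) ((j:ℤ)-l+1)
            - σ ((i:ℤ)-k) ((j:ℤ)-l) - σ ((i:ℤ)-k+1) ((j:ℤ)-l+1))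
        = (∑ j ∈ Icc 1 (lam i), ∑ l ∈ Icc 1 (mu k),
            (σ ((i:ℤ)-k+1) ((j:ℤ)-l) + σ ((i:ℤ)-k) ((j:ℤ)-l+1)))
          - ∑ j ∈ Icc 1 (lam i), ∑ l ∈ Icc 1 (mu k),
            (σ ((i:ℤ)-k) ((j:ℤ)-l) + σ ((i:ℤ)-k+1) ((j:ℤ)-l+1)) := by
      rw [← Finset.sum_sub_distrib]
      refine Finset.sum_congr rfl fun j _ => ?_
      rw [← Finset.sum_sub_distrib]
      exact Finset.sum_congr rfl fun l _ => by abel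
    rw [expand] at hk
    exact sub_eq_iff_eq_add'.mp hk
  rw [h2, show ∑ i ∈ Icc 1 N, ∑ k ∈ Icc 1 N,
        ((∑ j ∈ Icc 1 (min (lam i) (mu k)),
          (σ ((i:ℤ)-k) ((lam i:ℤ)+1-j) - σ ((i:ℤ)-k+1) ((lam i:ℤ)+1-j)))
        + ∑ l ∈ Icc 1 (min (lam i) (mu k)),
          (σ ((i:ℤ)-k+1) ((l:ℤ) - mu k) - σ ((i:ℤ)-k) ((l:ℤ) - mu k)))
      = (∑ i ∈ Icc 1 N, ∑ k ∈ Icc 1 N, ∑ j ∈ Icc 1 (min (lam i) (mu k)),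
          (σ ((i:ℤ)-k) ((lam i:ℤ)+1-j) - σ ((i:ℤ)-k+1) ((lam i:ℤ)+1-j)))
        + ∑ i ∈ Icc 1 N, ∑ k ∈ Icc 1 N, ∑ l ∈ Icc 1 (min (lam i) (mu k)),
          (σ ((i:ℤ)-k+1) ((l:ℤ) - mu k) - σ ((i:ℤ)-k) ((l:ℤ) - mu k)) from by
      rw [← Finset.sum_add_distrib]
      exact Finset.sum_congr rfl fun i _ => Finset.sum_add_distrib]
  abel

end core

def cellFin (lam : ℕ → ℕ) (N L : ℕ) : Finset (ℕ × ℕ) :=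
  (Icc 1 N ×ˢ Icc 1 L).filter (fun s => s.2 ≤ lam s.1)

lemma nek_coe_cellFin (lam : ℕ → ℕ) (N L : ℕ)
    (hN : ∀ i, N ≤ i → lam i = 0) (hL : ∀ i, 1 ≤ i → lam i ≤ L) :
    (cellFin lam N L : Set (ℕ × ℕ)) = cellsOf lam := by
  ext s
  simp only [cellFin, Finset.coe_filter, Finset.mem_product, Finset.mem_Icc,
    Set.mem_setOf_eq, cellsOf]
  constructor
  · rintro ⟨⟨⟨h1, h2⟩, h3, h4⟩, h5⟩; exact ⟨h1, h3, h5⟩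
  · rintro ⟨h1, h2, h3⟩
    have hs1 : s.1 ≤ N := by
      by_contra hc
      have := hN s.1 (by omega)
      omega
    have hs2 : s.2 ≤ L := le_trans h3 (hL s.1 h1)
    exact ⟨⟨⟨h1, hs1⟩, h2, hs2⟩, h3⟩

lemma nek_sum_cellFin {M' : Type*} [AddCommMonoid M'] (lam : ℕ → ℕ) (N L : ℕ)
    (hL : ∀ i, 1 ≤ i → lam i ≤ L) (F : ℕ × ℕ → M') :
    ∑ s ∈ cellFin lam N L, F s = ∑ i ∈ Icc 1 N, ∑ j ∈ Icc 1 (lam i), F (i, j) := by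
  rw [cellFin, Finset.sum_filter, Finset.sum_product]
  refine Finset.sum_congr rfl fun i hi => ?_
  simp only [Finset.mem_Icc] at hi
  rw [← Finset.sum_filter, show (Icc 1 L).filter (fun j => j ≤ lam i) = Icc 1 (lam i) from by
    ext j
    simp only [Finset.mem_filter, Finset.mem_Icc]
    have := hL i hi.1
    omega]

lemma nek_count {α : Type*} (F : Finset α) (g : α → ℤ × ℤ) (p : ℤ × ℤ) :
    Multiset.count p (F.val.map g) = ∑ x ∈ F, (if p = g x then (1:ℕ) else 0) := by
  classical
  rw [Multiset.count_map]
  exact Finset.card_filter _ _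

section corecells

variable (lam mu : ℕ → ℕ) (N L : ℕ)
  (hlam1 : ∀ i j, 1 ≤ i → i ≤ j → lam j ≤ lam i)
  (hlamN : ∀ i, N ≤ i → lam i = 0)
  (hmu1 : ∀ i j, 1 ≤ i → i ≤ j → mu j ≤ mu i)
  (hmuN : ∀ i, N ≤ i → mu i = 0)
  (hlamL : ∀ i, 1 ≤ i → lam i ≤ L)
  (hmuL : ∀ i, 1 ≤ i → mu i ≤ L)

include hlam1 hlamN hmu1 hmuN hlamL hmuL in
lemma nek_core_cells (σ : ℤ → ℤ → M) :
    (∑ st ∈ cellFin lam N L ×ˢ cellFin mu N L,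
        (σ ((st.1.1:ℤ) - st.2.1 + 1) ((st.1.2:ℤ) - st.2.2)
          + σ ((st.1.1:ℤ) - st.2.1) ((st.1.2:ℤ) - st.2.2 + 1)))
      + (∑ s ∈ cellFin lam N L, σ (s.1:ℤ) (s.2:ℤ))
      + (∑ t ∈ cellFin mu N L, σ (1 - (t.1:ℤ)) (1 - (t.2:ℤ)))
    = (∑ st ∈ cellFin lam N L ×ˢ cellFin mu N L,
        (σ ((st.1.1:ℤ) - st.2.1) ((st.1.2:ℤ) - st.2.2)
          + σ ((st.1.1:ℤ) - st.2.1 + 1) ((st.1.2:ℤ) - st.2.2 + 1)))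
      + (∑ s ∈ cellFin lam N L, σ ((s.1:ℤ) - conjOf mu s.2) ((lam s.1:ℤ) - s.2 + 1))
      + (∑ t ∈ cellFin mu N L, σ ((conjOf lam t.2:ℤ) + 1 - t.1) ((t.2:ℤ) - mu t.1)) := by
  have expand : ∀ G : ℕ × ℕ → ℕ × ℕ → M,
      ∑ st ∈ cellFin lam N L ×ˢ cellFin mu N L, G st.1 st.2
        = ∑ i ∈ Icc 1 N, ∑ k ∈ Icc 1 N, ∑ j ∈ Icc 1 (lam i), ∑ l ∈ Icc 1 (mu k),
            G (i, j) (k, l) := by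
    intro G
    rw [Finset.sum_product, nek_sum_cellFin lam N L hlamL]
    trans (∑ i ∈ Icc 1 N, ∑ j ∈ Icc 1 (lam i), ∑ k ∈ Icc 1 N, ∑ l ∈ Icc 1 (mu k),
        G (i, j) (k, l))
    · exact Finset.sum_congr rfl fun i _ =>
        Finset.sum_congr rfl fun j _ => nek_sum_cellFin mu N L hmuL _
    · exact Finset.sum_congr rfl fun i _ => Finset.sum_comm
  rw [expand (fun s t => σ ((s.1:ℤ) - t.1 + 1) ((s.2:ℤ) - t.2)
        + σ ((s.1:ℤ) - t.1) ((s.2:ℤ) - t.2 + 1)),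
    expand (fun s t => σ ((s.1:ℤ) - t.1) ((s.2:ℤ) - t.2)
        + σ ((s.1:ℤ) - t.1 + 1) ((s.2:ℤ) - t.2 + 1)),
    nek_sum_cellFin lam N L hlamL (fun s => σ (s.1:ℤ) (s.2:ℤ)),
    nek_sum_cellFin mu N L hmuL (fun t => σ (1 - (t.1:ℤ)) (1 - (t.2:ℤ))),
    nek_sum_cellFin lam N L hlamL
      (fun s => σ ((s.1:ℤ) - conjOf mu s.2) ((lam s.1:ℤ) - s.2 + 1)),
    nek_sum_cellFin mu N L hmuL
      (fun t => σ ((conjOf lam t.2:ℤ) + 1 - t.1) ((t.2:ℤ) - mu t.1))]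
  exact nek_core lam mu N hlam1 hlamN hmu1 hmuN σ

end corecells

section msets

variable (lam mu : ℕ → ℕ) (N L : ℕ)
  (hlam1 : ∀ i j, 1 ≤ i → i ≤ j → lam j ≤ lam i)
  (hlamN : ∀ i, N ≤ i → lam i = 0)
  (hmu1 : ∀ i j, 1 ≤ i → i ≤ j → mu j ≤ mu i)
  (hmuN : ∀ i, N ≤ i → mu i = 0)
  (hlamL : ∀ i, 1 ≤ i → lam i ≤ L)
  (hmuL : ∀ i, 1 ≤ i → mu i ≤ L)

include hlam1 hlamN hmu1 hmuN hlamL hmuL in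
lemma nek_multiset :
    ((cellFin lam N L ×ˢ cellFin mu N L).val.map
        (fun st => ((st.1.1:ℤ) - st.2.1 + 1, (st.1.2:ℤ) - st.2.2))
      + (cellFin lam N L ×ˢ cellFin mu N L).val.map
        (fun st => ((st.1.1:ℤ) - st.2.1, (st.1.2:ℤ) - st.2.2 + 1))
      + (cellFin lam N L).val.map (fun s => ((s.1:ℤ), (s.2:ℤ)))
      + (cellFin mu N L).val.map (fun t => (1 - (t.1:ℤ), 1 - (t.2:ℤ))))
    = ((cellFin lam N L ×ˢ cellFin mu N L).val.map
        (fun st => ((st.1.1:ℤ) - st.2.1, (st.1.2:ℤ) - st.2.2))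
      + (cellFin lam N L ×ˢ cellFin mu N L).val.map
        (fun st => ((st.1.1:ℤ) - st.2.1 + 1, (st.1.2:ℤ) - st.2.2 + 1))
      + (cellFin lam N L).val.map
        (fun s => ((s.1:ℤ) - conjOf mu s.2, (lam s.1:ℤ) - s.2 + 1))
      + (cellFin mu N L).val.map
        (fun t => ((conjOf lam t.2:ℤ) + 1 - t.1, (t.2:ℤ) - mu t.1))) := by
  apply Multiset.ext.2
  intro p
  simp only [Multiset.count_add, nek_count]
  have key := nek_core_cells lam mu N L hlam1 hlamN hmu1 hmuN hlamL hmuL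
    (fun a b => if p = (a, b) then (1:ℤ) else 0)
  rw [Finset.sum_add_distrib, Finset.sum_add_distrib] at key
  exact_mod_cast key

section pt

variable (q1 q2 u v : ℂ) (hq1 : q1 ≠ 0) (hq2 : q2 ≠ 0) (hv : v ≠ 0)

include hq1 hq2 in
lemma pt_div (a b c d : ℤ) :
    (u * q1 ^ a * q2 ^ b) / (v * q1 ^ c * q2 ^ d)
      = q1 ^ (a - c) * q2 ^ (b - d) * u / v := by
  rw [zpow_sub₀ hq1, zpow_sub₀ hq2]
  field_simp

include hq1 hq2 hv in
lemma pt_chi_div (s t : ℕ × ℕ) :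
    chiOf q1 q2 u s / chiOf q1 q2 v t
      = q1 ^ ((s.1:ℤ) - t.1) * q2 ^ ((s.2:ℤ) - t.2) * u / v := by
  unfold chiOf
  rw [pt_div q1 q2 u v hq1 hq2,
    show ((s.1:ℤ) - 1) - ((t.1:ℤ) - 1) = (s.1:ℤ) - t.1 from by ring,
    show ((s.2:ℤ) - 1) - ((t.2:ℤ) - 1) = (s.2:ℤ) - t.2 from by ring]

include hq1 hq2 hv in
lemma pt_e1 (s t : ℕ × ℕ) :
    1 - q1 * (chiOf q1 q2 u s / chiOf q1 q2 v t)
      = 1 - q1 ^ ((s.1:ℤ) - t.1 + 1) * q2 ^ ((s.2:ℤ) - t.2) * u / v := by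
  rw [pt_chi_div q1 q2 u v hq1 hq2 hv, zpow_add_one₀ hq1]
  ring

include hq1 hq2 hv in
lemma pt_e2 (s t : ℕ × ℕ) :
    1 - q2 * (chiOf q1 q2 u s / chiOf q1 q2 v t)
      = 1 - q1 ^ ((s.1:ℤ) - t.1) * q2 ^ ((s.2:ℤ) - t.2 + 1) * u / v := by
  rw [pt_chi_div q1 q2 u v hq1 hq2 hv, zpow_add_one₀ hq2]
  ring

include hq1 hq2 hv in
lemma pt_e4 (s t : ℕ × ℕ) :
    1 - q1 * q2 * (chiOf q1 q2 u s / chiOf q1 q2 v t)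
      = 1 - q1 ^ ((s.1:ℤ) - t.1 + 1) * q2 ^ ((s.2:ℤ) - t.2 + 1) * u / v := by
  rw [pt_chi_div q1 q2 u v hq1 hq2 hv, zpow_add_one₀ hq1, zpow_add_one₀ hq2]
  ring

include hq1 hq2 hv in
lemma pt_e3 (s t : ℕ × ℕ) :
    1 - chiOf q1 q2 u s / chiOf q1 q2 v t
      = 1 - q1 ^ ((s.1:ℤ) - t.1) * q2 ^ ((s.2:ℤ) - t.2) * u / v := by
  rw [pt_chi_div q1 q2 u v hq1 hq2 hv]

include hq1 hq2 in
lemma pt_p3 (s : ℕ × ℕ) :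
    1 - q1 * q2 * (chiOf q1 q2 u s / v)
      = 1 - q1 ^ (s.1:ℤ) * q2 ^ (s.2:ℤ) * u / v := by
  have e1 : q1 ^ (s.1:ℤ) = q1 ^ ((s.1:ℤ) - 1) * q1 := by
    rw [← zpow_add_one₀ hq1]; congr 1; ring
  have e2 : q2 ^ (s.2:ℤ) = q2 ^ ((s.2:ℤ) - 1) * q2 := by
    rw [← zpow_add_one₀ hq2]; congr 1; ring
  rw [e1, e2]
  unfold chiOf
  ring

include hq1 hq2 hv in
lemma pt_p4 (t : ℕ × ℕ) :
    1 - u / chiOf q1 q2 v t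
      = 1 - q1 ^ (1 - (t.1:ℤ)) * q2 ^ (1 - (t.2:ℤ)) * u / v := by
  have h := pt_div q1 q2 u v hq1 hq2 0 0 ((t.1:ℤ) - 1) ((t.2:ℤ) - 1)
  simp only [zpow_zero, mul_one, zero_sub, neg_sub] at h
  unfold chiOf
  rw [h]

end pt

set_option maxHeartbeats 1000000 in
/-- the two product formulas for the K-theoretic Nekrasov factor
`N_{λμ}(u,v)` agree. -/
theorem nekrasov_factor_two_forms
    (q1 q2 u v : ℂ) (hq1 : q1 ≠ 0) (hq2 : q2 ≠ 0) (hu : u ≠ 0) (hv : v ≠ 0)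
    (lam mu : ℕ → ℕ)
    (hlam1 : ∀ i j, 1 ≤ i → i ≤ j → lam j ≤ lam i)
    (hlam2 : ∃ N, ∀ i, N ≤ i → lam i = 0)
    (hmu1 : ∀ i j, 1 ≤ i → i ≤ j → mu j ≤ mu i)
    (hmu2 : ∃ N, ∀ i, N ≤ i → mu i = 0)
    (hne1 : ∀ s ∈ cellsOf lam, ∀ t ∈ cellsOf mu,
      1 - chiOf q1 q2 u s / chiOf q1 q2 v t ≠ 0)
    (hne2 : ∀ s ∈ cellsOf lam, ∀ t ∈ cellsOf mu,
      1 - q1 * q2 * (chiOf q1 q2 u s / chiOf q1 q2 v t) ≠ 0) :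
    (∏ᶠ s ∈ cellsOf lam, ∏ᶠ t ∈ cellsOf mu,
        ((1 - q1 * (chiOf q1 q2 u s / chiOf q1 q2 v t)) *
         (1 - q2 * (chiOf q1 q2 u s / chiOf q1 q2 v t))) /
        ((1 - chiOf q1 q2 u s / chiOf q1 q2 v t) *
         (1 - q1 * q2 * (chiOf q1 q2 u s / chiOf q1 q2 v t)))) *
      (∏ᶠ s ∈ cellsOf lam, (1 - q1 * q2 * (chiOf q1 q2 u s / v))) *
      (∏ᶠ t ∈ cellsOf mu, (1 - u / chiOf q1 q2 v t))
    =
    (∏ᶠ s ∈ cellsOf lam,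
        (1 - q1 ^ (-(legOf mu s)) * q2 ^ (armOf lam s + 1) * u / v)) *
      (∏ᶠ t ∈ cellsOf mu,
        (1 - q1 ^ (legOf lam t + 1) * q2 ^ (-(armOf mu t)) * u / v)) := by
  classical
  obtain ⟨N1, hN1⟩ := hlam2
  obtain ⟨N2, hN2⟩ := hmu2
  set N := max N1 N2 + 1 with hNdef
  have hlamN : ∀ i, N ≤ i → lam i = 0 := fun i hi => hN1 i (by omega)
  have hmuN : ∀ i, N ≤ i → mu i = 0 := fun i hi => hN2 i (by omega)
  set L := max (lam 1) (mu 1) with hLdef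
  have hlamL : ∀ i, 1 ≤ i → lam i ≤ L :=
    fun i hi => le_trans (hlam1 1 i le_rfl hi) (le_max_left _ _)
  have hmuL : ∀ i, 1 ≤ i → mu i ≤ L :=
    fun i hi => le_trans (hmu1 1 i le_rfl hi) (le_max_right _ _)
  have hcoeL : (cellFin lam N L : Set (ℕ × ℕ)) = cellsOf lam :=
    nek_coe_cellFin lam N L hlamN hlamL
  have hcoeM : (cellFin mu N L : Set (ℕ × ℕ)) = cellsOf mu :=
    nek_coe_cellFin mu N L hmuN hmuL
  rw [← hcoeL, ← hcoeM]
  simp only [finprod_mem_coe_finset]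
  set f : ℤ × ℤ → ℂ := fun p => 1 - q1 ^ p.1 * q2 ^ p.2 * u / v with hf
  set Cl := cellFin lam N L with hCl
  set Cm := cellFin mu N L with hCm
  have hmemL : ∀ s ∈ Cl, s ∈ cellsOf lam := fun s hs => by
    rw [← hcoeL]; exact hs
  have hmemM : ∀ t ∈ Cm, t ∈ cellsOf mu := fun t ht => by
    rw [← hcoeM]; exact ht
  -- the eight canonical products
  have step1 : (∏ s ∈ Cl, ∏ t ∈ Cm,
        ((1 - q1 * (chiOf q1 q2 u s / chiOf q1 q2 v t)) *
         (1 - q2 * (chiOf q1 q2 u s / chiOf q1 q2 v t))) /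
        ((1 - chiOf q1 q2 u s / chiOf q1 q2 v t) *
         (1 - q1 * q2 * (chiOf q1 q2 u s / chiOf q1 q2 v t))))
      = ((∏ st ∈ Cl ×ˢ Cm, f ((st.1.1:ℤ) - st.2.1 + 1, (st.1.2:ℤ) - st.2.2)) *
          ∏ st ∈ Cl ×ˢ Cm, f ((st.1.1:ℤ) - st.2.1, (st.1.2:ℤ) - st.2.2 + 1)) /
        ((∏ st ∈ Cl ×ˢ Cm, f ((st.1.1:ℤ) - st.2.1, (st.1.2:ℤ) - st.2.2)) *
          ∏ st ∈ Cl ×ˢ Cm, f ((st.1.1:ℤ) - st.2.1 + 1, (st.1.2:ℤ) - st.2.2 + 1)) := by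
    rw [← Finset.prod_product' (f := fun s t =>
      ((1 - q1 * (chiOf q1 q2 u s / chiOf q1 q2 v t)) *
         (1 - q2 * (chiOf q1 q2 u s / chiOf q1 q2 v t))) /
        ((1 - chiOf q1 q2 u s / chiOf q1 q2 v t) *
         (1 - q1 * q2 * (chiOf q1 q2 u s / chiOf q1 q2 v t))))]
    rw [Finset.prod_div_distrib, Finset.prod_mul_distrib, Finset.prod_mul_distrib]
    congr 1
    · congr 1
      · exact Finset.prod_congr rfl fun st _ => pt_e1 q1 q2 u v hq1 hq2 hv st.1 st.2
      · exact Finset.prod_congr rfl fun st _ => pt_e2 q1 q2 u v hq1 hq2 hv st.1 st.2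
    · congr 1
      · exact Finset.prod_congr rfl fun st _ => pt_e3 q1 q2 u v hq1 hq2 hv st.1 st.2
      · exact Finset.prod_congr rfl fun st _ => pt_e4 q1 q2 u v hq1 hq2 hv st.1 st.2
  have step3 : (∏ s ∈ Cl, (1 - q1 * q2 * (chiOf q1 q2 u s / v)))
      = ∏ s ∈ Cl, f ((s.1:ℤ), (s.2:ℤ)) :=
    Finset.prod_congr rfl fun s _ => pt_p3 q1 q2 u v hq1 hq2 s
  have step4 : (∏ t ∈ Cm, (1 - u / chiOf q1 q2 v t))
      = ∏ t ∈ Cm, f (1 - (t.1:ℤ), 1 - (t.2:ℤ)) :=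
    Finset.prod_congr rfl fun t _ => pt_p4 q1 q2 u v hq1 hq2 hv t
  have stepR1 : (∏ s ∈ Cl, (1 - q1 ^ (-(legOf mu s)) * q2 ^ (armOf lam s + 1) * u / v))
      = ∏ s ∈ Cl, f ((s.1:ℤ) - conjOf mu s.2, (lam s.1:ℤ) - s.2 + 1) := by
    refine Finset.prod_congr rfl fun s _ => ?_
    show _ = 1 - q1 ^ ((s.1:ℤ) - conjOf mu s.2) * q2 ^ ((lam s.1:ℤ) - s.2 + 1) * u / v
    unfold legOf armOf
    rw [show -((conjOf mu s.2:ℤ) - s.1) = (s.1:ℤ) - conjOf mu s.2 from by ring]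
  have stepR2 : (∏ t ∈ Cm, (1 - q1 ^ (legOf lam t + 1) * q2 ^ (-(armOf mu t)) * u / v))
      = ∏ t ∈ Cm, f ((conjOf lam t.2:ℤ) + 1 - t.1, (t.2:ℤ) - mu t.1) := by
    refine Finset.prod_congr rfl fun t _ => ?_
    show _ = 1 - q1 ^ ((conjOf lam t.2:ℤ) + 1 - t.1) * q2 ^ ((t.2:ℤ) - mu t.1) * u / v
    unfold legOf armOf
    rw [show (conjOf lam t.2:ℤ) - t.1 + 1 = (conjOf lam t.2:ℤ) + 1 - t.1 from by ring,
      show -((mu t.1:ℤ) - t.2) = (t.2:ℤ) - mu t.1 from by ring]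
  rw [step1, step3, step4, stepR1, stepR2]
  -- nonvanishing of the two denominator products
  have hCne : (∏ st ∈ Cl ×ˢ Cm, f ((st.1.1:ℤ) - st.2.1, (st.1.2:ℤ) - st.2.2)) ≠ 0 := by
    rw [Finset.prod_ne_zero_iff]
    intro st hst
    rw [Finset.mem_product] at hst
    simp only [hf]
    rw [← pt_e3 q1 q2 u v hq1 hq2 hv st.1 st.2]
    exact hne1 st.1 (hmemL st.1 hst.1) st.2 (hmemM st.2 hst.2)
  have hDne : (∏ st ∈ Cl ×ˢ Cm, f ((st.1.1:ℤ) - st.2.1 + 1, (st.1.2:ℤ) - st.2.2 + 1)) ≠ 0 := by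
    rw [Finset.prod_ne_zero_iff]
    intro st hst
    rw [Finset.mem_product] at hst
    simp only [hf]
    rw [← pt_e4 q1 q2 u v hq1 hq2 hv st.1 st.2]
    exact hne2 st.1 (hmemL st.1 hst.1) st.2 (hmemM st.2 hst.2)
  -- the multiset identity transported through f
  have hm := nek_multiset lam mu N L hlam1 hlamN hmu1 hmuN hlamL hmuL
  have fact := congrArg (fun m => (Multiset.map f m).prod) hm
  simp only [Multiset.map_add, Multiset.prod_add, Multiset.map_map, Function.comp] at fact
  rw [← Finset.prod_eq_multiset_prod, ← Finset.prod_eq_multiset_prod,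
    ← Finset.prod_eq_multiset_prod, ← Finset.prod_eq_multiset_prod,
    ← Finset.prod_eq_multiset_prod, ← Finset.prod_eq_multiset_prod,
    ← Finset.prod_eq_multiset_prod, ← Finset.prod_eq_multiset_prod] at fact
  rw [div_mul_eq_mul_div, div_mul_eq_mul_div, div_eq_iff (mul_ne_zero hCne hDne)]
  linear_combination fact
end msets
end

section
/- Let q1, q2, q3 be nonzero complex numbers with q1·q2·q3 = 1 and 0 < |q1| < 1, and let y ∈ ℂ satisfy |y| < 1, |y/q2| < 1 and |y/q3| < 1. Then the series Σ_{r=1}^∞ (1/r)·y^r·q1^r·(1 − q2^r)(1 − q3^r)/(1 − q1^r) converges absolutely and exp( − Σ_{r=1}^∞ (1/r)·y^r·q1^r·(1 − q2^r)(1 − q3^r)/(1 − q1^r) ) = [ (q1·y; q1)_∞ · (y; q1)_∞ ] / [ (q2^{−1}·y; q1)_∞ · (q3^{−1}·y; q1)_∞ ]. (With y = q1^{l−m}·v2/v1 this is the closed product formula for the eigenvalue R_{ml}(v1/v2) of the diagonal R-matrix of the vector representation of the Ding–Iohara–Miki algebra.) -/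
open Complex

/-- The q-Pochhammer infinite product `(x; p)_∞ = ∏_{j≥0} (1 - p^j x)`. -/
noncomputable def qPochInf (p x : ℂ) : ℂ := ∏' j : ℕ, (1 - p ^ j * x)

lemma core (p x : ℂ) (hp : ‖p‖ < 1) (hx : ‖x‖ < 1) :
    Summable (fun r : ℕ => ‖x ^ (r + 1) / (((r : ℂ) + 1) * (1 - p ^ (r + 1)))‖) ∧
    HasSum (fun r : ℕ => x ^ (r + 1) / (((r : ℂ) + 1) * (1 - p ^ (r + 1))))
      (∑' j : ℕ, -Complex.log (1 - p ^ j * x)) ∧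
    Complex.exp (∑' j : ℕ, Complex.log (1 - p ^ j * x)) = qPochInf p x := by
  have hp0 : 0 ≤ ‖p‖ := norm_nonneg p
  have hsmall : ∀ j : ℕ, ‖p ^ j * x‖ < 1 := by
    intro j
    rw [norm_mul, norm_pow]
    calc ‖p‖ ^ j * ‖x‖ ≤ 1 * ‖x‖ := by
          apply mul_le_mul_of_nonneg_right _ (norm_nonneg x)
          exact pow_le_one₀ hp0 hp.le
      _ = ‖x‖ := one_mul _
      _ < 1 := hx
  have hne : ∀ j : ℕ, 1 - p ^ j * x ≠ 0 := by
    intro j h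
    have hz : p ^ j * x = 1 := by linear_combination -h
    have : ‖p ^ j * x‖ = 1 := by rw [hz]; simp
    linarith [hsmall j]
  set F : ℕ × ℕ → ℂ := fun rj => (p ^ rj.2 * x) ^ (rj.1 + 1) / ((rj.1 : ℂ) + 1) with hF
  have hFnorm : Summable fun rj : ℕ × ℕ => ‖F rj‖ := by
    have hgeom : Summable fun rj : ℕ × ℕ => ‖x‖ ^ (rj.1 + 1) * ‖p‖ ^ rj.2 := by
      have h1 : Summable fun r : ℕ => ‖x‖ ^ (r + 1) := by
        simpa [pow_succ, mul_comm] using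
          (summable_geometric_of_lt_one (norm_nonneg x) hx).mul_left ‖x‖
      exact h1.mul_of_nonneg (summable_geometric_of_lt_one hp0 hp)
        (fun r => pow_nonneg (norm_nonneg x) _) (fun j => pow_nonneg hp0 _)
    refine Summable.of_nonneg_of_le (fun _ => norm_nonneg _) ?_ hgeom
    rintro ⟨r, j⟩
    have h1 : (1 : ℝ) ≤ ‖((r : ℂ) + 1)‖ := by
      rw [show ((r : ℂ) + 1) = ((r + 1 : ℕ) : ℂ) by push_cast; ring, Complex.norm_natCast]
      exact_mod_cast Nat.one_le_iff_ne_zero.2 (Nat.succ_ne_zero r)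
    have h2 : ‖(p ^ j * x) ^ (r + 1)‖ ≤ ‖x‖ ^ (r + 1) * ‖p‖ ^ j := by
      rw [norm_pow, norm_mul, norm_pow, mul_pow, ← pow_mul, mul_comm (‖p‖ ^ (j * (r+1)))]
      apply mul_le_mul_of_nonneg_left _ (pow_nonneg (norm_nonneg x) _)
      exact pow_le_pow_of_le_one hp0 hp.le (Nat.le_mul_of_pos_right j (Nat.succ_pos r))
    calc ‖F (r, j)‖ = ‖(p ^ j * x) ^ (r + 1)‖ / ‖((r : ℂ) + 1)‖ := by
          rw [hF]; exact norm_div _ _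
      _ ≤ ‖(p ^ j * x) ^ (r + 1)‖ / 1 :=
          div_le_div_of_nonneg_left (norm_nonneg _) one_pos h1 |>.trans (le_of_eq rfl)
      _ = ‖(p ^ j * x) ^ (r + 1)‖ := div_one _
      _ ≤ ‖x‖ ^ (r + 1) * ‖p‖ ^ j := h2
  have hFsum : Summable F := hFnorm.of_norm
  have hfib_r : ∀ r : ℕ, HasSum (fun j => F (r, j))
      (x ^ (r + 1) / (((r : ℂ) + 1) * (1 - p ^ (r + 1)))) := by
    intro r
    have hpr : ‖p ^ (r + 1)‖ < 1 := by
      rw [norm_pow]; exact pow_lt_one₀ hp0 hp (Nat.succ_ne_zero r)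
    have h := (hasSum_geometric_of_norm_lt_one hpr).mul_right (x ^ (r + 1) / ((r : ℂ) + 1))
    have h2 : (fun j => F (r, j)) = fun j => (p ^ (r + 1)) ^ j * (x ^ (r + 1) / ((r : ℂ) + 1)) := by
      funext j
      rw [hF]
      simp only [mul_pow, ← pow_mul]
      rw [mul_comm j (r + 1), pow_mul]
      ring
    have heq : x ^ (r + 1) / (((r : ℂ) + 1) * (1 - p ^ (r + 1)))
        = (1 - p ^ (r + 1))⁻¹ * (x ^ (r + 1) / ((r : ℂ) + 1)) := by
      rw [inv_mul_eq_div, div_div, mul_comm ((r : ℂ) + 1)]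
    rw [h2, heq]
    exact h
  have hfib_j : ∀ j : ℕ, HasSum (fun r => F (r, j)) (-Complex.log (1 - p ^ j * x)) := by
    intro j
    have h := hasSum_taylorSeries_neg_log (z := p ^ j * x) (hsmall j)
    have h' := (hasSum_nat_add_iff' (f := fun n : ℕ => (p ^ j * x) ^ n / n) 1).2 h
    simp only [Finset.range_one, Finset.sum_singleton, pow_zero, Nat.cast_zero, div_zero,
      sub_zero] at h'
    convert h' using 2 with r
    case e'_3 => rfl
    rw [hF]
    push_cast
    ring_nf
  have hmain : HasSum (fun r : ℕ => x ^ (r + 1) / (((r : ℂ) + 1) * (1 - p ^ (r + 1))))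
      (∑' j : ℕ, -Complex.log (1 - p ^ j * x)) := by
    have hT1 : HasSum (fun r : ℕ => x ^ (r + 1) / (((r : ℂ) + 1) * (1 - p ^ (r + 1))))
        (∑' rj : ℕ × ℕ, F rj) := hFsum.hasSum.prod_fiberwise hfib_r
    have hswap : HasSum (fun j : ℕ => -Complex.log (1 - p ^ j * x))
        (∑' rj : ℕ × ℕ, F rj) := by
      have hs := (hFsum.prod_symm.hasSum.prod_fiberwise (fun j => hfib_j j))
      have he : (∑' b : ℕ × ℕ, F b.swap) = ∑' b : ℕ × ℕ, F b := (Equiv.prodComm ℕ ℕ).tsum_eq F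
      rwa [he] at hs
    rwa [← hswap.tsum_eq] at hT1
  have hsumlog : Summable fun j : ℕ => Complex.log (1 - p ^ j * x) := by
    have : Summable fun j : ℕ => -Complex.log (1 - p ^ j * x) :=
      (hFsum.prod_symm.hasSum.prod_fiberwise (fun j => hfib_j j)).summable
    simpa using this.neg
  refine ⟨?_, hmain, ?_⟩
  · have houter : HasSum (fun r : ℕ => ∑' j : ℕ, ‖F (r, j)‖) (∑' rj : ℕ × ℕ, ‖F rj‖) :=
      hFnorm.hasSum.prod_fiberwise (fun r => (hFnorm.prod_factor r).hasSum)
    refine Summable.of_nonneg_of_le (fun _ => norm_nonneg _) ?_ houter.summable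
    intro r
    rw [← (hfib_r r).tsum_eq]
    exact norm_tsum_le_tsum_norm (hFnorm.prod_factor r)
  · have h := hsumlog.hasSum.cexp
    have hfun : (cexp ∘ fun j : ℕ => Complex.log (1 - p ^ j * x))
        = fun j : ℕ => 1 - p ^ j * x := funext fun j => Complex.exp_log (hne j)
    rw [hfun] at h
    simp only [qPochInf]
    exact h.tprod_eq.symm

/-- for `q1 q2 q3 = 1`, `0 < |q1| < 1` and `|y| < 1`, `|y/q2| < 1`, `|y/q3| < 1`,
the series `Σ_{r≥1} (1/r) y^r q1^r (1-q2^r)(1-q3^r)/(1-q1^r)` converges absolutely and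
`exp(-Σ) = (q1 y; q1)_∞ (y; q1)_∞ / ((q2⁻¹ y; q1)_∞ (q3⁻¹ y; q1)_∞)`. -/
theorem vector_R_matrix_product_formula
    (q1 q2 q3 : ℂ) (hq1 : q1 ≠ 0) (hq2 : q2 ≠ 0) (hq3 : q3 ≠ 0)
    (hq : q1 * q2 * q3 = 1)
    (h0 : 0 < ‖q1‖) (h1 : ‖q1‖ < 1)
    (y : ℂ) (hy : ‖y‖ < 1)
    (hy2 : ‖y / q2‖ < 1) (hy3 : ‖y / q3‖ < 1) :
    Summable (fun r : ℕ =>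
      ‖(1 / ((r : ℂ) + 1)) * y ^ (r + 1) * q1 ^ (r + 1) *
        (1 - q2 ^ (r + 1)) * (1 - q3 ^ (r + 1)) / (1 - q1 ^ (r + 1))‖) ∧
    Complex.exp (- ∑' r : ℕ,
        (1 / ((r : ℂ) + 1)) * y ^ (r + 1) * q1 ^ (r + 1) *
          (1 - q2 ^ (r + 1)) * (1 - q3 ^ (r + 1)) / (1 - q1 ^ (r + 1)))
      = (qPochInf q1 (q1 * y) * qPochInf q1 y) /
        (qPochInf q1 (q2⁻¹ * y) * qPochInf q1 (q3⁻¹ * y)) := by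
  have hq1n : ‖q1‖ < 1 := h1
  have hyn : ‖y‖ < 1 := hy
  have hx1 : ‖q1 * y‖ < 1 := by
    rw [norm_mul]
    calc ‖q1‖ * ‖y‖ ≤ 1 * ‖y‖ :=
          mul_le_mul_of_nonneg_right hq1n.le (norm_nonneg y)
      _ = ‖y‖ := one_mul _
      _ < 1 := hyn
  have hx3 : ‖q2⁻¹ * y‖ < 1 := by
    rw [mul_comm, ← div_eq_mul_inv]; exact hy2
  have hx4 : ‖q3⁻¹ * y‖ < 1 := by
    rw [mul_comm, ← div_eq_mul_inv]; exact hy3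
  obtain ⟨S1, H1, E1⟩ := core q1 (q1 * y) hq1n hx1
  obtain ⟨S2, H2, E2⟩ := core q1 y hq1n hyn
  obtain ⟨S3, H3, E3⟩ := core q1 (q2⁻¹ * y) hq1n hx3
  obtain ⟨S4, H4, E4⟩ := core q1 (q3⁻¹ * y) hq1n hx4
  have hq2inv : q2⁻¹ = q1 * q3 := by
    field_simp
    linear_combination -hq
  have hq3inv : q3⁻¹ = q1 * q2 := by
    field_simp
    linear_combination -hq
  have hden : ∀ r : ℕ, 1 - q1 ^ (r + 1) ≠ 0 := by
    intro r h
    have hz : q1 ^ (r + 1) = 1 := by linear_combination -h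
    have : ‖q1 ^ (r + 1)‖ < 1 := by
      rw [norm_pow]; exact pow_lt_one₀ (norm_nonneg q1) hq1n (Nat.succ_ne_zero r)
    rw [hz, norm_one] at this
    linarith
  have key : ∀ r : ℕ,
      (1 / ((r : ℂ) + 1)) * y ^ (r + 1) * q1 ^ (r + 1) *
        (1 - q2 ^ (r + 1)) * (1 - q3 ^ (r + 1)) / (1 - q1 ^ (r + 1))
      = (q1 * y) ^ (r + 1) / (((r : ℂ) + 1) * (1 - q1 ^ (r + 1)))
        + y ^ (r + 1) / (((r : ℂ) + 1) * (1 - q1 ^ (r + 1)))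
        - (q2⁻¹ * y) ^ (r + 1) / (((r : ℂ) + 1) * (1 - q1 ^ (r + 1)))
        - (q3⁻¹ * y) ^ (r + 1) / (((r : ℂ) + 1) * (1 - q1 ^ (r + 1))) := by
    intro r
    have hn0 : ((r : ℂ) + 1) ≠ 0 := Nat.cast_add_one_ne_zero r
    have hpow : q1 ^ (r + 1) * q2 ^ (r + 1) * q3 ^ (r + 1) = 1 := by
      rw [← mul_pow, ← mul_pow, hq, one_pow]
    rw [hq2inv, hq3inv, ← add_div, ← sub_div, ← sub_div,
      eq_div_iff (mul_ne_zero hn0 (hden r))]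
    have expand : (1 / ((r : ℂ) + 1)) * y ^ (r + 1) * q1 ^ (r + 1) *
        (1 - q2 ^ (r + 1)) * (1 - q3 ^ (r + 1)) / (1 - q1 ^ (r + 1)) *
        (((r : ℂ) + 1) * (1 - q1 ^ (r + 1)))
        = y ^ (r + 1) * q1 ^ (r + 1) * (1 - q2 ^ (r + 1)) * (1 - q3 ^ (r + 1)) := by
      field_simp
      rw [mul_div_assoc, div_self (hden r), mul_one]
    rw [expand]
    linear_combination (y ^ (r + 1)) * hpow
  constructor
  · refine Summable.of_nonneg_of_le (fun _ => norm_nonneg _) ?_ (((S1.add S2).add S3).add S4)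
    intro r
    rw [key r]
    refine le_trans (norm_sub_le _ _) ?_
    refine le_trans (add_le_add_left (norm_sub_le _ _) _) ?_
    exact le_trans (add_le_add_left (add_le_add_left (norm_add_le _ _) _) _) le_rfl
  · have hsum := ((H1.add H2).sub H3).sub H4
    have hts : (∑' r : ℕ,
        (1 / ((r : ℂ) + 1)) * y ^ (r + 1) * q1 ^ (r + 1) *
          (1 - q2 ^ (r + 1)) * (1 - q3 ^ (r + 1)) / (1 - q1 ^ (r + 1)))
        = (∑' j : ℕ, -Complex.log (1 - q1 ^ j * (q1 * y)))
          + (∑' j : ℕ, -Complex.log (1 - q1 ^ j * y))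
          - (∑' j : ℕ, -Complex.log (1 - q1 ^ j * (q2⁻¹ * y)))
          - (∑' j : ℕ, -Complex.log (1 - q1 ^ j * (q3⁻¹ * y))) := by
      have hfe : (fun r : ℕ =>
          (1 / ((r : ℂ) + 1)) * y ^ (r + 1) * q1 ^ (r + 1) *
            (1 - q2 ^ (r + 1)) * (1 - q3 ^ (r + 1)) / (1 - q1 ^ (r + 1)))
          = fun r : ℕ =>
            (q1 * y) ^ (r + 1) / (((r : ℂ) + 1) * (1 - q1 ^ (r + 1)))
              + y ^ (r + 1) / (((r : ℂ) + 1) * (1 - q1 ^ (r + 1)))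
              - (q2⁻¹ * y) ^ (r + 1) / (((r : ℂ) + 1) * (1 - q1 ^ (r + 1)))
              - (q3⁻¹ * y) ^ (r + 1) / (((r : ℂ) + 1) * (1 - q1 ^ (r + 1))) := funext key
      rw [hfe]
      exact hsum.tsum_eq
    rw [hts]
    have t1 : (∑' j : ℕ, -Complex.log (1 - q1 ^ j * (q1 * y)))
        = -∑' j : ℕ, Complex.log (1 - q1 ^ j * (q1 * y)) := tsum_neg
    have t2 : (∑' j : ℕ, -Complex.log (1 - q1 ^ j * y))
        = -∑' j : ℕ, Complex.log (1 - q1 ^ j * y) := tsum_neg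
    have t3 : (∑' j : ℕ, -Complex.log (1 - q1 ^ j * (q2⁻¹ * y)))
        = -∑' j : ℕ, Complex.log (1 - q1 ^ j * (q2⁻¹ * y)) := tsum_neg
    have t4 : (∑' j : ℕ, -Complex.log (1 - q1 ^ j * (q3⁻¹ * y)))
        = -∑' j : ℕ, Complex.log (1 - q1 ^ j * (q3⁻¹ * y)) := tsum_neg
    rw [t1, t2, t3, t4]
    rw [show -((-∑' j : ℕ, Complex.log (1 - q1 ^ j * (q1 * y)))
          + (-∑' j : ℕ, Complex.log (1 - q1 ^ j * y))
          - (-∑' j : ℕ, Complex.log (1 - q1 ^ j * (q2⁻¹ * y)))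
          - (-∑' j : ℕ, Complex.log (1 - q1 ^ j * (q3⁻¹ * y))))
        = (∑' j : ℕ, Complex.log (1 - q1 ^ j * (q1 * y)))
          + (∑' j : ℕ, Complex.log (1 - q1 ^ j * y))
          + (-(∑' j : ℕ, Complex.log (1 - q1 ^ j * (q2⁻¹ * y))))
          + (-(∑' j : ℕ, Complex.log (1 - q1 ^ j * (q3⁻¹ * y)))) by ring]
    rw [Complex.exp_add, Complex.exp_add, Complex.exp_add, Complex.exp_neg, Complex.exp_neg,
      E1, E2, E3, E4]
    field_simp
end

section
/- Let q1, q2, q3 be nonzero complex numbers with q1·q2·q3 = 1 and 0 < |q1| < 1, let 𝔮 be a nonzero complex number with 𝔮² = q3, let n, l, m be integers, and let x be a nonzero complex number. Set β := q1^{n−l}·x and assume |q1·q3^m·β| < 1, |q1·q2·q3^m·β| < 1, |q1/β| < 1, |q1·q3/β| < 1, |1/β| < 1, |1/(q2·β)| < 1 and |1/(q3·β)| < 1. Then all the series below converge absolutely and exp( − Σ_{r=1}^∞ (1/r)·β^{−r}·q1^r·(1 − q2^r)(1 − q3^r)/(1 − q1^r) ) = Υ(q1·𝔮^m | 𝔮^m·β)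 / Υ(q1·𝔮^{m+1} | 𝔮^{m−1}·β). That is, the R-matrix eigenvalue R_{nl}(x) equals the ratio Υ(q1·𝔮^m | q1^{n−l}·𝔮^m·x)/Υ(q1·𝔮^{m+1} | q1^{n−l}·𝔮^{m−1}·x) for every integer m. -/
open Complex

/-- The summand of the series defining `Υ(α | x)` (index `r ≥ 1` is `r+1` here). -/
noncomputable def upsilonSummand (q1 q2 α x : ℂ) (r : ℕ) : ℂ :=
  (α ^ (r + 1) * (1 - q2 ^ (r + 1)) / (((r : ℂ) + 1) * (1 - q1 ^ (r + 1)))) *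
    (x ^ (r + 1) - (x⁻¹) ^ (r + 1))

/-- `Υ(α | x) = exp( Σ_{r≥1} (α^r (1-q2^r)/(r(1-q1^r))) (x^r - x^{-r}) )`. -/
noncomputable def upsilonFun (q1 q2 α x : ℂ) : ℂ :=
  Complex.exp (∑' r : ℕ, upsilonSummand q1 q2 α x r)

/-- The summand of the series defining the diagonal R-matrix eigenvalue `R_{nl}(x)`. -/
noncomputable def rSummand (q1 q2 q3 : ℂ) (n l : ℤ) (x : ℂ) (r : ℕ) : ℂ :=
  (1 / ((r : ℂ) + 1)) * ((q1 ^ (n - l) * x)⁻¹) ^ (r + 1) * q1 ^ (r + 1) *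
    (1 - q2 ^ (r + 1)) * (1 - q3 ^ (r + 1)) / (1 - q1 ^ (r + 1))

/-- `R_{nl}(x) = exp( -Σ_{r≥1} (1/r)(q1^{n-l} x)^{-r} q1^r (1-q2^r)(1-q3^r)/(1-q1^r) )`. -/
noncomputable def rMat (q1 q2 q3 : ℂ) (n l : ℤ) (x : ℂ) : ℂ :=
  Complex.exp (- ∑' r : ℕ, rSummand q1 q2 q3 n l x r)

/-- Auxiliary geometric-type summand. -/
noncomputable def geomF (q1 c : ℂ) (r : ℕ) : ℂ :=
  c ^ (r + 1) / (((r : ℂ) + 1) * (1 - q1 ^ (r + 1)))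

lemma geom_denom_ne {q1 : ℂ} (h1 : ‖q1‖ < 1) (r : ℕ) :
    (((r : ℂ) + 1) * (1 - q1 ^ (r + 1))) ≠ 0 := by
  apply mul_ne_zero
  · exact Nat.cast_add_one_ne_zero r
  · intro h
    have hpow : q1 ^ (r + 1) = 1 := by linear_combination -h
    have : ‖q1 ^ (r + 1)‖ < 1 := by
      rw [norm_pow]
      exact pow_lt_one₀ (norm_nonneg _) h1 (Nat.succ_ne_zero r)
    rw [hpow] at this
    simp at this

lemma summable_geomF {q1 c : ℂ} (h1 : ‖q1‖ < 1) (hc : ‖c‖ < 1) :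
    Summable (fun r : ℕ => ‖geomF q1 c r‖) := by
  have hpos : 0 < 1 - ‖q1‖ := by linarith
  have hgeo : Summable (fun r : ℕ => ‖c‖ ^ r) :=
    summable_geometric_of_lt_one (norm_nonneg c) hc
  refine Summable.of_nonneg_of_le (fun r => norm_nonneg _) (fun r => ?_)
    (hgeo.mul_left ((1 - ‖q1‖)⁻¹ * ‖c‖))
  · 
    have hd1 : (1 : ℝ) ≤ ‖(r : ℂ) + 1‖ := by
      have : ((r : ℂ) + 1) = ((r + 1 : ℕ) : ℂ) := by push_cast; ring
      rw [this, Complex.norm_natCast]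
      exact_mod_cast Nat.one_le_iff_ne_zero.mpr (Nat.succ_ne_zero r)
    have hd2 : 1 - ‖q1‖ ≤ ‖1 - q1 ^ (r + 1)‖ := by
      have h3 : ‖q1 ^ (r + 1)‖ ≤ ‖q1‖ := by
        rw [norm_pow]
        calc ‖q1‖ ^ (r + 1) ≤ ‖q1‖ ^ 1 :=
              pow_le_pow_of_le_one (norm_nonneg _) h1.le (by omega)
          _ = ‖q1‖ := pow_one _
      have h4 := norm_sub_norm_le (1 : ℂ) (q1 ^ (r + 1))
      simp only [norm_one] at h4
      linarith
    have hdenom : 1 - ‖q1‖ ≤ ‖((r : ℂ) + 1) * (1 - q1 ^ (r + 1))‖ := by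
      rw [norm_mul]
      calc 1 - ‖q1‖ = 1 * (1 - ‖q1‖) := (one_mul _).symm
        _ ≤ ‖(r : ℂ) + 1‖ * ‖1 - q1 ^ (r + 1)‖ :=
            mul_le_mul hd1 hd2 hpos.le (by positivity)
    have : ‖geomF q1 c r‖ = ‖c‖ ^ (r + 1) /
        ‖((r : ℂ) + 1) * (1 - q1 ^ (r + 1))‖ := by
      simp [geomF, norm_div, norm_pow]
    rw [this]
    calc ‖c‖ ^ (r + 1) / ‖((r : ℂ) + 1) * (1 - q1 ^ (r + 1))‖
        ≤ ‖c‖ ^ (r + 1) / (1 - ‖q1‖) := by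
          apply div_le_div_of_nonneg_left (by positivity) hpos hdenom
      _ = (1 - ‖q1‖)⁻¹ * ‖c‖ * ‖c‖ ^ r := by
          rw [pow_succ]; field_simp

lemma norm_comb_le (a b c d : ℂ) : ‖a - b - c + d‖ ≤ ‖a‖ + ‖b‖ + ‖c‖ + ‖d‖ := by
  have h1 : ‖a - b‖ ≤ ‖a‖ + ‖b‖ := norm_sub_le _ _
  have h2 : ‖a - b - c‖ ≤ ‖a - b‖ + ‖c‖ := norm_sub_le _ _
  have h3 : ‖a - b - c + d‖ ≤ ‖a - b - c‖ + ‖d‖ := norm_add_le _ _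
  linarith

lemma upsilon_decomp (q1 q2 α x : ℂ) (h1 : ‖q1‖ < 1) (hx : x ≠ 0) (r : ℕ) :
    upsilonSummand q1 q2 α x r =
      geomF q1 (α * x) r - geomF q1 (q2 * (α * x)) r
        - geomF q1 (α / x) r + geomF q1 (q2 * (α / x)) r := by
  have hd := geom_denom_ne h1 r
  have hx' : x ^ (r + 1) ≠ 0 := pow_ne_zero _ hx
  simp only [upsilonSummand, geomF, mul_pow, div_pow, inv_pow]
  field_simp
  ring

lemma r_decomp (q1 q2 q3 : ℂ) (h1 : ‖q1‖ < 1) (n l : ℤ) (x β : ℂ)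
    (hβ : β = q1 ^ (n - l) * x) (hβ0 : β ≠ 0) (r : ℕ) :
    rSummand q1 q2 q3 n l x r =
      geomF q1 (q1 / β) r - geomF q1 (q2 * (q1 / β)) r
        - geomF q1 (q1 * q3 / β) r + geomF q1 (q2 * (q1 * q3 / β)) r := by
  obtain ⟨hd1, hd2⟩ := mul_ne_zero_iff.mp (geom_denom_ne h1 r)
  simp only [rSummand, geomF, ← hβ, mul_pow, div_pow, inv_pow]
  field_simp
  ring

/-- the R-matrix eigenvalue `R_{nl}(x)` equals the ratio
`Υ(q1 𝔮^m | 𝔮^m β)/Υ(q1 𝔮^{m+1} | 𝔮^{m-1} β)` with `β = q1^{n-l} x`, for every integer `m`. -/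
theorem rmatrix_upsilon_ratio
    (q1 q2 q3 : ℂ) (hq1 : q1 ≠ 0) (hq2 : q2 ≠ 0) (hq3 : q3 ≠ 0)
    (hq : q1 * q2 * q3 = 1)
    (h0 : 0 < ‖q1‖) (h1 : ‖q1‖ < 1)
    (qq : ℂ) (hqq0 : qq ≠ 0) (hqq : qq ^ 2 = q3)
    (n l m : ℤ) (x : ℂ) (hx : x ≠ 0)
    (β : ℂ) (hβ : β = q1 ^ (n - l) * x)
    (hc1 : ‖q1 * q3 ^ m * β‖ < 1)
    (hc2 : ‖q1 * q2 * q3 ^ m * β‖ < 1)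
    (hc3 : ‖q1 / β‖ < 1)
    (hc4 : ‖q1 * q3 / β‖ < 1)
    (hc5 : ‖1 / β‖ < 1)
    (hc6 : ‖1 / (q2 * β)‖ < 1)
    (hc7 : ‖1 / (q3 * β)‖ < 1) :
    Summable (fun r : ℕ => ‖rSummand q1 q2 q3 n l x r‖) ∧
    Summable (fun r : ℕ => ‖upsilonSummand q1 q2 (q1 * qq ^ m) (qq ^ m * β) r‖) ∧
    Summable (fun r : ℕ => ‖upsilonSummand q1 q2 (q1 * qq ^ (m + 1)) (qq ^ (m - 1) * β) r‖) ∧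
    rMat q1 q2 q3 n l x
      = upsilonFun q1 q2 (q1 * qq ^ m) (qq ^ m * β) /
        upsilonFun q1 q2 (q1 * qq ^ (m + 1)) (qq ^ (m - 1) * β) := by
  have hβ0 : β ≠ 0 := by
    rw [hβ]; exact mul_ne_zero (zpow_ne_zero _ hq1) hx
  -- abs bounds for the six geometric arguments
  have hA1 : ‖q1 * q3 ^ m * β‖ < 1 := hc1
  have hA2 : ‖q2 * (q1 * q3 ^ m * β)‖ < 1 := by
    rw [show q2 * (q1 * q3 ^ m * β) = q1 * q2 * q3 ^ m * β by ring]; exact hc2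
  have hA3 : ‖q1 / β‖ < 1 := hc3
  have hA4 : ‖q2 * (q1 / β)‖ < 1 := by
    rw [show q2 * (q1 / β) = 1 / (q3 * β) by
      field_simp; linear_combination hq]
    exact hc7
  have hA5 : ‖q1 * q3 / β‖ < 1 := hc4
  have hA6 : ‖q2 * (q1 * q3 / β)‖ < 1 := by
    rw [show q2 * (q1 * q3 / β) = 1 / β by
      field_simp; linear_combination hq]
    exact hc5
  -- summability of the six geometric series
  have S1 := summable_geomF h1 hA1
  have S2 := summable_geomF h1 hA2
  have S3 := summable_geomF h1 hA3
  have S4 := summable_geomF h1 hA4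
  have S5 := summable_geomF h1 hA5
  have S6 := summable_geomF h1 hA6
  -- zpow identities
  have hq3m : q3 ^ m = qq ^ m * qq ^ m := by
    rw [← hqq, pow_two, mul_zpow]
  have hqqsum : qq ^ (m + 1) * qq ^ (m - 1) = qq ^ m * qq ^ m := by
    rw [← zpow_add₀ hqq0, ← zpow_add₀ hqq0]
    congr 1; ring
  have hqm0 : qq ^ m ≠ 0 := zpow_ne_zero _ hqq0
  have hqm10 : qq ^ (m - 1) ≠ 0 := zpow_ne_zero _ hqq0
  have hE1 : (q1 * qq ^ m) * (qq ^ m * β) = q1 * q3 ^ m * β := by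
    rw [hq3m]; ring
  have hE2 : (q1 * qq ^ m) / (qq ^ m * β) = q1 / β := by
    field_simp
  have hE3 : (q1 * qq ^ (m + 1)) * (qq ^ (m - 1) * β) = q1 * q3 ^ m * β := by
    rw [hq3m, ← hqqsum]; ring
  have hE4 : (q1 * qq ^ (m + 1)) / (qq ^ (m - 1) * β) = q1 * q3 / β := by
    have h5 : qq ^ (m + 1) = qq ^ (m - 1) * q3 := by
      rw [← hqq, ← zpow_natCast qq 2, ← zpow_add₀ hqq0]
      congr 1; push_cast; ring
    rw [h5]
    field_simp
  -- pointwise decompositions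
  have hu1 : ∀ r : ℕ, upsilonSummand q1 q2 (q1 * qq ^ m) (qq ^ m * β) r =
      geomF q1 (q1 * q3 ^ m * β) r - geomF q1 (q2 * (q1 * q3 ^ m * β)) r
        - geomF q1 (q1 / β) r + geomF q1 (q2 * (q1 / β)) r := by
    intro r
    rw [upsilon_decomp q1 q2 _ _ h1 (mul_ne_zero hqm0 hβ0) r, hE1, hE2]
  have hu2 : ∀ r : ℕ, upsilonSummand q1 q2 (q1 * qq ^ (m + 1)) (qq ^ (m - 1) * β) r =
      geomF q1 (q1 * q3 ^ m * β) r - geomF q1 (q2 * (q1 * q3 ^ m * β)) r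
        - geomF q1 (q1 * q3 / β) r + geomF q1 (q2 * (q1 * q3 / β)) r := by
    intro r
    rw [upsilon_decomp q1 q2 _ _ h1 (mul_ne_zero hqm10 hβ0) r, hE3, hE4]
  have hre : ∀ r : ℕ, rSummand q1 q2 q3 n l x r =
      geomF q1 (q1 / β) r - geomF q1 (q2 * (q1 / β)) r
        - geomF q1 (q1 * q3 / β) r + geomF q1 (q2 * (q1 * q3 / β)) r :=
    r_decomp q1 q2 q3 h1 n l x β hβ hβ0
  -- summability of the three series
  have SR : Summable (fun r : ℕ => ‖rSummand q1 q2 q3 n l x r‖) := by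
    refine Summable.of_nonneg_of_le (fun r => norm_nonneg _) (fun r => ?_)
      (((S3.add S4).add S5).add S6)
    rw [hre r]; exact norm_comb_le _ _ _ _
  have SU1 : Summable (fun r : ℕ =>
      ‖upsilonSummand q1 q2 (q1 * qq ^ m) (qq ^ m * β) r‖) := by
    refine Summable.of_nonneg_of_le (fun r => norm_nonneg _) (fun r => ?_)
      (((S1.add S2).add S3).add S4)
    rw [hu1 r]; exact norm_comb_le _ _ _ _
  have SU2 : Summable (fun r : ℕ =>
      ‖upsilonSummand q1 q2 (q1 * qq ^ (m + 1)) (qq ^ (m - 1) * β) r‖) := by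
    refine Summable.of_nonneg_of_le (fun r => norm_nonneg _) (fun r => ?_)
      (((S1.add S2).add S5).add S6)
    rw [hu2 r]; exact norm_comb_le _ _ _ _
  refine ⟨SR, SU1, SU2, ?_⟩
  -- the main identity
  have SU1' : Summable (fun r : ℕ => upsilonSummand q1 q2 (q1 * qq ^ m) (qq ^ m * β) r) :=
    SU1.of_norm
  have SU2' : Summable (fun r : ℕ =>
      upsilonSummand q1 q2 (q1 * qq ^ (m + 1)) (qq ^ (m - 1) * β) r) :=
    SU2.of_norm
  unfold rMat upsilonFun
  rw [← Complex.exp_sub]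
  congr 1
  rw [← Summable.tsum_sub SU1' SU2', ← tsum_neg]
  apply tsum_congr
  intro r
  rw [hre r, hu1 r, hu2 r]
  ring
end

section
/- Let q1, q2 be nonzero complex numbers with 0 < |q1| < 1, let n ≤ m be integers, and let v, w be nonzero complex numbers with |q1·w/v| < 1 and |q1·q2·w/v| < 1. Then the series Σ_{r=1}^∞ (q1^{(m−n)r} − 1)·(w/v)^r·q1^r·(1 − q2^r)/(r·(1 − q1^r)) converges absolutely and exp( Σ_{r=1}^∞ (q1^{(m−n)r} − 1)·(w/v)^r·q1^r·(1 − q2^r)/(r·(1 − q1^r)) ) = ∏_{j=1}^{m−n} (1 − q1^j·w/v)/(1 − q1^j·q2·w/v). (The left-hand side is the normalized two-point function Ã_{nm}(v,w) = A_{nm}(v,w)/A_{00}(v,w) of vector intertwiners, and the right-hand side is a ratio of Nekrasov factors for a single-row partition.) -/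
open Complex

private lemma hasSum_shift_log {y : ℂ} (hy : ‖y‖ < 1) :
    HasSum (fun r : ℕ => y ^ (r + 1) / ((r : ℂ) + 1)) (-Complex.log (1 - y)) := by
  have h := Complex.hasSum_taylorSeries_neg_log hy
  have h1 : HasSum (fun r : ℕ => y ^ (r + 1) / ((r + 1 : ℕ) : ℂ))
      (-Complex.log (1 - y) - ∑ i ∈ Finset.range 1, y ^ i / (i : ℂ)) :=
    (hasSum_nat_add_iff' (f := fun n : ℕ => y ^ n / (n : ℂ)) 1).mpr h
  simp only [Finset.range_one, Finset.sum_singleton, Nat.cast_zero, div_zero, sub_zero] at h1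
  convert h1 using 2 with r
  push_cast
  ring

private lemma summable_norm_pow_div {y : ℂ} (hy : ‖y‖ < 1) :
    Summable (fun r : ℕ => ‖y ^ (r + 1) / ((r : ℂ) + 1)‖) := by
  refine Summable.of_nonneg_of_le (fun r => norm_nonneg _) (fun r => ?_)
    (((summable_geometric_of_lt_one (norm_nonneg y) hy)).mul_left ‖y‖)
  rw [norm_div, norm_pow]
  have hd : (1 : ℝ) ≤ ‖(r : ℂ) + 1‖ := by
    have : ((r : ℂ) + 1) = ((r + 1 : ℕ) : ℂ) := by push_cast; ring
    rw [this, Complex.norm_natCast]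
    exact_mod_cast Nat.one_le_iff_ne_zero.mpr (Nat.succ_ne_zero r)
  calc ‖y‖ ^ (r + 1) / ‖(r : ℂ) + 1‖ ≤ ‖y‖ ^ (r + 1) / 1 := by
        apply div_le_div_of_nonneg_left ?_ ?_ hd
        · positivity
        · norm_num
    _ = ‖y‖ * ‖y‖ ^ r := by rw [div_one, pow_succ]; ring

private lemma key_alg (q1 q2 x : ℂ) (N s : ℕ) (hne : q1 ^ (s + 1) ≠ 1) :
    (q1 ^ (N * (s + 1)) - 1) * x ^ (s + 1) * q1 ^ (s + 1) * (1 - q2 ^ (s + 1)) /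
      (((s : ℂ) + 1) * (1 - q1 ^ (s + 1)))
    = ∑ j ∈ Finset.range N,
        ((q1 ^ (j + 1) * q2 * x) ^ (s + 1) / ((s : ℂ) + 1)
          - (q1 ^ (j + 1) * x) ^ (s + 1) / ((s : ℂ) + 1)) := by
  have ht : ((s : ℂ) + 1) ≠ 0 := by
    have : ((s : ℂ) + 1) = ((s + 1 : ℕ) : ℂ) := by push_cast; ring
    rw [this]; exact_mod_cast Nat.succ_ne_zero s
  set u := q1 ^ (s + 1) with hu
  have hRW : ∀ j ∈ Finset.range N,
      (q1 ^ (j + 1) * q2 * x) ^ (s + 1) / ((s : ℂ) + 1)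
        - (q1 ^ (j + 1) * x) ^ (s + 1) / ((s : ℂ) + 1)
      = u ^ j * (u * (q2 ^ (s + 1) - 1) * x ^ (s + 1) / ((s : ℂ) + 1)) := by
    intro j _
    have hj : (q1 ^ (j + 1)) ^ (s + 1) = u ^ (j + 1) := by
      rw [hu, ← pow_mul, ← pow_mul, mul_comm]
    rw [mul_pow, mul_pow, mul_pow, hj]
    field_simp
    ring
  rw [Finset.sum_congr rfl hRW, ← Finset.sum_mul, geom_sum_eq hne]
  have hN : q1 ^ (N * (s + 1)) = u ^ N := by rw [hu, ← pow_mul, mul_comm]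
  have h1 : u - 1 ≠ 0 := sub_ne_zero.mpr hne
  have h2 : (1 : ℂ) - u ≠ 0 := fun h => hne (by linear_combination -h)
  rw [hN]
  field_simp
  ring

/-- the normalized two-point function `Ã_{nm}(v,w)` of vector intertwiners
equals the finite product `∏_{j=1}^{m-n} (1 - q1^j w/v)/(1 - q1^j q2 w/v)`. -/
theorem normalized_two_point_nekrasov
    (q1 q2 : ℂ) (hq1 : q1 ≠ 0) (hq2 : q2 ≠ 0)
    (h0 : 0 < ‖q1‖) (h1 : ‖q1‖ < 1)
    (n m : ℤ) (hnm : n ≤ m)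
    (v w : ℂ) (hv : v ≠ 0) (hw : w ≠ 0)
    (ha : ‖q1 * w / v‖ < 1)
    (hb : ‖q1 * q2 * w / v‖ < 1) :
    Summable (fun r : ℕ =>
      ‖(q1 ^ ((m - n) * ((r : ℤ) + 1)) - 1) * (w / v) ^ (r + 1) * q1 ^ (r + 1) *
        (1 - q2 ^ (r + 1)) / (((r : ℂ) + 1) * (1 - q1 ^ (r + 1)))‖) ∧
    Complex.exp (∑' r : ℕ,
        (q1 ^ ((m - n) * ((r : ℤ) + 1)) - 1) * (w / v) ^ (r + 1) * q1 ^ (r + 1) *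
          (1 - q2 ^ (r + 1)) / (((r : ℂ) + 1) * (1 - q1 ^ (r + 1))))
      = ∏ j ∈ Finset.range (m - n).toNat,
          (1 - q1 ^ (j + 1) * w / v) / (1 - q1 ^ (j + 1) * q2 * w / v) := by
  set x := w / v with hx
  set N := (m - n).toNat with hNdef
  have hmn : m - n = (N : ℤ) := (Int.toNat_of_nonneg (sub_nonneg.mpr hnm)).symm
  -- norms
  have hq1n : ‖q1‖ < 1 := h1
  have hq1ne1 : ∀ r : ℕ, q1 ^ (r + 1) ≠ 1 := by
    intro r h
    have : ‖q1 ^ (r + 1)‖ < 1 := by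
      rw [norm_pow]
      exact pow_lt_one₀ (norm_nonneg _) hq1n (Nat.succ_ne_zero r)
    rw [h, norm_one] at this
    exact lt_irrefl _ this
  have hy1 : ∀ j : ℕ, ‖q1 ^ (j + 1) * x‖ < 1 := by
    intro j
    have : ‖q1 ^ (j + 1) * x‖ ≤ ‖q1 * w / v‖ := by
      rw [hx, norm_mul, mul_div_assoc, norm_mul, norm_pow]
      apply mul_le_mul_of_nonneg_right ?_ (norm_nonneg _)
      exact pow_le_of_le_one (norm_nonneg _) hq1n.le (Nat.succ_ne_zero j)
    exact lt_of_le_of_lt this ha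
  have hy2 : ∀ j : ℕ, ‖q1 ^ (j + 1) * q2 * x‖ < 1 := by
    intro j
    have : ‖q1 ^ (j + 1) * q2 * x‖ ≤ ‖q1 * q2 * w / v‖ := by
      rw [hx, norm_mul, norm_mul, mul_div_assoc, norm_mul, norm_mul, norm_pow]
      apply mul_le_mul_of_nonneg_right ?_ (norm_nonneg _)
      apply mul_le_mul_of_nonneg_right ?_ (norm_nonneg _)
      exact pow_le_of_le_one (norm_nonneg _) hq1n.le (Nat.succ_ne_zero j)
    exact lt_of_le_of_lt this hb
  -- rewrite the summand
  set F : ℕ → ℕ → ℂ := fun j r =>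
    (q1 ^ (j + 1) * q2 * x) ^ (r + 1) / ((r : ℂ) + 1)
      - (q1 ^ (j + 1) * x) ^ (r + 1) / ((r : ℂ) + 1) with hF
  have hA : ∀ r : ℕ,
      (q1 ^ ((m - n) * ((r : ℤ) + 1)) - 1) * (w / v) ^ (r + 1) * q1 ^ (r + 1) *
        (1 - q2 ^ (r + 1)) / (((r : ℂ) + 1) * (1 - q1 ^ (r + 1)))
      = ∑ j ∈ Finset.range N, F j r := by
    intro r
    have hz : q1 ^ ((m - n) * ((r : ℤ) + 1)) = q1 ^ (N * (r + 1)) := by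
      rw [hmn]
      have : (N : ℤ) * ((r : ℤ) + 1) = ((N * (r + 1) : ℕ) : ℤ) := by push_cast; ring
      rw [this, zpow_natCast]
    rw [hz, ← hx]
    exact key_alg q1 q2 x N r (hq1ne1 r)
  -- summability of each F j
  have hFsum : ∀ j : ℕ, HasSum (F j)
      (Complex.log (1 - q1 ^ (j + 1) * x) - Complex.log (1 - q1 ^ (j + 1) * q2 * x)) := by
    intro j
    have h2 := hasSum_shift_log (hy2 j)
    have h1' := hasSum_shift_log (hy1 j)
    have := h2.sub h1'
    convert this using 1
    · rfl
    ring
  constructor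
  · -- summability of norms
    have hgeo : Summable (fun r : ℕ => ∑ j ∈ Finset.range N,
        (‖(q1 ^ (j + 1) * q2 * x) ^ (r + 1) / ((r : ℂ) + 1)‖
          + ‖(q1 ^ (j + 1) * x) ^ (r + 1) / ((r : ℂ) + 1)‖)) := by
      apply summable_sum
      intro j _
      exact (summable_norm_pow_div (hy2 j)).add (summable_norm_pow_div (hy1 j))
    refine Summable.of_nonneg_of_le (fun r => norm_nonneg _) (fun r => ?_) hgeo
    rw [hA r]
    calc ‖∑ j ∈ Finset.range N, F j r‖ ≤ ∑ j ∈ Finset.range N, ‖F j r‖ :=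
          norm_sum_le _ _
      _ ≤ _ := by
          apply Finset.sum_le_sum
          intro j _
          exact norm_sub_le _ _
  · -- the product formula
    have htsum : (∑' r : ℕ,
        (q1 ^ ((m - n) * ((r : ℤ) + 1)) - 1) * (w / v) ^ (r + 1) * q1 ^ (r + 1) *
          (1 - q2 ^ (r + 1)) / (((r : ℂ) + 1) * (1 - q1 ^ (r + 1))))
        = ∑ j ∈ Finset.range N,
            (Complex.log (1 - q1 ^ (j + 1) * x) - Complex.log (1 - q1 ^ (j + 1) * q2 * x)) := by
      have hhs : HasSum (fun r : ℕ => ∑ j ∈ Finset.range N, F j r)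
          (∑ j ∈ Finset.range N,
            (Complex.log (1 - q1 ^ (j + 1) * x) - Complex.log (1 - q1 ^ (j + 1) * q2 * x))) :=
        hasSum_sum (fun j _ => hFsum j)
      rw [show (fun r : ℕ =>
        (q1 ^ ((m - n) * ((r : ℤ) + 1)) - 1) * (w / v) ^ (r + 1) * q1 ^ (r + 1) *
          (1 - q2 ^ (r + 1)) / (((r : ℂ) + 1) * (1 - q1 ^ (r + 1))))
        = fun r => ∑ j ∈ Finset.range N, F j r from funext hA]
      exact hhs.tsum_eq
    rw [htsum, Complex.exp_sum]
    apply Finset.prod_congr rfl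
    intro j _
    have hne1 : (1 : ℂ) - q1 ^ (j + 1) * x ≠ 0 := by
      intro h
      have := hy1 j
      rw [show q1 ^ (j + 1) * x = 1 from by linear_combination -h] at this
      simp at this
    have hne2 : (1 : ℂ) - q1 ^ (j + 1) * q2 * x ≠ 0 := by
      intro h
      have := hy2 j
      rw [show q1 ^ (j + 1) * q2 * x = 1 from by linear_combination -h] at this
      simp at this
    rw [Complex.exp_sub, Complex.exp_log hne1, Complex.exp_log hne2, hx]
    ring_nf
end

section
/- Let q1, q2, q3 be nonzero complex numbers with q1·q2·q3 = 1, let K, K′ be nonzero complex numbers, let Π, Λ be finite subsets of ℤ³, and let u, v be nonzero complex numbers. Assume the series defining 𝐄^{K,K′}_{Π,Λ}(y) converges absolutely both at y = u/v and at y = q3·u/v. Then the series defining R̃^{K,K′}_{Π,Λ}(v/u) converges absolutely and 𝐄^{K,K′}_{Π,Λ}(q3·u/v) = R̃^{K,K′}_{Π,Λ}(v/u) · 𝐄^{K,K′}_{Π,Λ}(u/v). (This is the two-point quantum KZ relation for MacMahon intertwiners: the two-point function E^{K,K′}_{Π,Λ}(v,u) satisfies E^{K,K′}_{Π,Λ}(𝔮^{−2}v,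 u) = R̃^{K,K′}_{Π,Λ}(v/u)·E^{K,K′}_{Π,Λ}(v,u), where 𝔮² = q3.) -/
open Complex

/-- `κ_r = (q1^r - 1)(q2^r - 1)(q3^r - 1)`. -/
noncomputable def kap (q1 q2 q3 : ℂ) (r : ℕ) : ℂ :=
  (q1 ^ r - 1) * (q2 ^ r - 1) * (q3 ^ r - 1)

/-- The weight `x_b = q1^i q2^j q3^k` of a box `b = (i,j,k) ∈ ℤ³`. -/
noncomputable def boxWt (q1 q2 q3 : ℂ) (b : ℤ × ℤ × ℤ) : ℂ :=
  q1 ^ b.1 * q2 ^ b.2.1 * q3 ^ b.2.2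

/-- The summand (at index `r ≥ 1`, here `r+1`) of the series defining the two-point function
`𝐄^{K,K′}_{Π,Λ}(y)` of MacMahon intertwiners. -/
noncomputable def eSummand (q1 q2 q3 K K' : ℂ) (Pi' Λ : Finset (ℤ × ℤ × ℤ)) (y : ℂ)
    (r : ℕ) : ℂ :=
  -(((1 - q1 ^ (r + 1)) * (1 - q2 ^ (r + 1)) / ((r : ℂ) + 1)) * y ^ (r + 1) *
      ((∑ b ∈ Λ, boxWt q1 q2 q3 b ^ (r + 1)) + (1 - K' ^ (r + 1)) / kap q1 q2 q3 (r + 1)) *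
      ((∑ b ∈ Pi', ((boxWt q1 q2 q3 b)⁻¹) ^ (r + 1)) -
        (1 - (K⁻¹) ^ (r + 1)) / kap q1 q2 q3 (r + 1)))

/-- `𝐄^{K,K′}_{Π,Λ}(y)`. -/
noncomputable def eFun (q1 q2 q3 K K' : ℂ) (Pi' Λ : Finset (ℤ × ℤ × ℤ)) (y : ℂ) : ℂ :=
  Complex.exp (∑' r : ℕ, eSummand q1 q2 q3 K K' Pi' Λ y r)

/-- The summand (at index `r ≥ 1`, here `r+1`) of the series defining the MacMahon R-matrix
eigenvalue `R̃^{K,K′}_{Π,Λ}(z)`. -/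
noncomputable def rtSummand (q1 q2 q3 K K' : ℂ) (Pi' Λ : Finset (ℤ × ℤ × ℤ)) (z : ℂ)
    (r : ℕ) : ℂ :=
  -((kap q1 q2 q3 (r + 1) / ((r : ℂ) + 1)) * (z⁻¹) ^ (r + 1) *
      ((∑ b ∈ Λ, boxWt q1 q2 q3 b ^ (r + 1)) + (1 - K' ^ (r + 1)) / kap q1 q2 q3 (r + 1)) *
      ((∑ b ∈ Pi', ((boxWt q1 q2 q3 b)⁻¹) ^ (r + 1)) -
        (1 - (K⁻¹) ^ (r + 1)) / kap q1 q2 q3 (r + 1)))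

/-- `R̃^{K,K′}_{Π,Λ}(z)`. -/
noncomputable def rTil (q1 q2 q3 K K' : ℂ) (Pi' Λ : Finset (ℤ × ℤ × ℤ)) (z : ℂ) : ℂ :=
  Complex.exp (∑' r : ℕ, rtSummand q1 q2 q3 K K' Pi' Λ z r)

lemma rt_eq_diff (q1 q2 q3 K K' : ℂ) (Pi' Λ : Finset (ℤ × ℤ × ℤ)) (u v : ℂ) (r : ℕ) :
    rtSummand q1 q2 q3 K K' Pi' Λ (v / u) r
      = eSummand q1 q2 q3 K K' Pi' Λ (q3 * u / v) r
        - eSummand q1 q2 q3 K K' Pi' Λ (u / v) r := by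
  unfold rtSummand eSummand kap
  rw [inv_div, mul_div_assoc q3 u v, mul_pow]
  ring

/-- the two-point quantum KZ relation for MacMahon intertwiners:
`𝐄^{K,K′}_{Π,Λ}(q3 u/v) = R̃^{K,K′}_{Π,Λ}(v/u) · 𝐄^{K,K′}_{Π,Λ}(u/v)`. -/
theorem macmahon_two_point_qKZ
    (q1 q2 q3 : ℂ) (hq1 : q1 ≠ 0) (hq2 : q2 ≠ 0) (hq3 : q3 ≠ 0)
    (hq : q1 * q2 * q3 = 1)
    (K K' : ℂ) (hK : K ≠ 0) (hK' : K' ≠ 0)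
    (Pi' Λ : Finset (ℤ × ℤ × ℤ))
    (u v : ℂ) (hu : u ≠ 0) (hv : v ≠ 0)
    (hsum1 : Summable (fun r : ℕ => ‖eSummand q1 q2 q3 K K' Pi' Λ (u / v) r‖))
    (hsum2 : Summable (fun r : ℕ => ‖eSummand q1 q2 q3 K K' Pi' Λ (q3 * u / v) r‖)) :
    Summable (fun r : ℕ => ‖rtSummand q1 q2 q3 K K' Pi' Λ (v / u) r‖) ∧
    eFun q1 q2 q3 K K' Pi' Λ (q3 * u / v)
      = rTil q1 q2 q3 K K' Pi' Λ (v / u) * eFun q1 q2 q3 K K' Pi' Λ (u / v) := by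
  have key : ∀ r, rtSummand q1 q2 q3 K K' Pi' Λ (v / u) r
      = eSummand q1 q2 q3 K K' Pi' Λ (q3 * u / v) r
        - eSummand q1 q2 q3 K K' Pi' Λ (u / v) r := rt_eq_diff q1 q2 q3 K K' Pi' Λ u v
  have hs1 : Summable (fun r : ℕ => eSummand q1 q2 q3 K K' Pi' Λ (u / v) r) :=
    hsum1.of_norm
  have hs2 : Summable (fun r : ℕ => eSummand q1 q2 q3 K K' Pi' Λ (q3 * u / v) r) :=
    hsum2.of_norm
  have hsr : Summable (fun r : ℕ => ‖rtSummand q1 q2 q3 K K' Pi' Λ (v / u) r‖) := by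
    apply (hsum2.add hsum1).of_nonneg_of_le (fun r => norm_nonneg _)
    intro r
    rw [key r]
    exact norm_sub_le _ _
  refine ⟨hsr, ?_⟩
  unfold eFun rTil
  rw [← Complex.exp_add]
  congr 1
  have : (∑' r : ℕ, rtSummand q1 q2 q3 K K' Pi' Λ (v / u) r)
      = (∑' r : ℕ, eSummand q1 q2 q3 K K' Pi' Λ (q3 * u / v) r)
        - (∑' r : ℕ, eSummand q1 q2 q3 K K' Pi' Λ (u / v) r) := by
    rw [← Summable.tsum_sub hs2 hs1]
    exact tsum_congr key
  rw [this]; ring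
end

section
/- Let q1, q2, q3 be nonzero complex numbers with q1·q2·q3 = 1, let 𝔮 be nonzero with 𝔮² = q3, fix finite subsets Λ^1,…,Λ^n and Ω^1,…,Ω^m of ℤ³, nonzero complex numbers K_1,…,K_n, K′_1,…,K′_m, v_1,…,v_n, w_1,…,w_m, and an index 1 ≤ i ≤ n. Define G := ( ∏_{1≤j<l≤n} 𝐄^{K_j,K_l}_{Λ^j,Λ^l}(v_l/v_j) · ∏_{1≤j<l≤m} 𝐄^{K′_j,K′_l}_{Ω^j,Ω^l}(𝔮²·w_l/w_j) ) / ( ∏_{s=1}^m ∏_{l=1}^n 𝐄^{K′_s,K_l}_{Ω^s,Λ^l}(𝔮·v_l/w_s) ), and let G′ be the same expression with v_i replaced by 𝔮^{−2}·v_i. Assume every series occurring in the 𝐄-factors of G and G′ and in the R̃-factors below converges absolutely. Then G′ = 𝒜_i · G, where 𝒜_i := ∏_{l=i+1}^n R̃^{K_i,K_l}_{Λ^i,Λ^l}(v_i/v_l) · ∏_{k=1}^{i−1} R̃^{K_k,K_i}_{Λ^k,Λ^i}(𝔮²·v_k/v_i)^{−1} · ∏_{s=1}^m R̃^{K′_s,K_i}_{Ω^s,Λ^i}(𝔮·w_s/v_i).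 (This is the series part of the MacMahon KZ equation in the variable v_i: the factorized correlation function of MacMahon intertwiners solves the generalized quantum KZ equation with shift p = 𝔮^{−2}; the zero-mode theta factors contribute the remaining factor K_i^{|Λ^i|}.) -/
open Complex

set_option maxHeartbeats 1000000

/-- The factorized correlation function of MacMahon intertwiners:
`G = (∏_{j<l} 𝐄^{K_j,K_l}_{Λ^j,Λ^l}(v_l/v_j) · ∏_{j<l} 𝐄^{K′_j,K′_l}_{Ω^j,Ω^l}(𝔮² w_l/w_j)) /
(∏_s ∏_l 𝐄^{K′_s,K_l}_{Ω^s,Λ^l}(𝔮 v_l/w_s))`. -/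
noncomputable def corrGM (q1 q2 q3 qq : ℂ) {n m : ℕ}
    (K : Fin n → ℂ) (K' : Fin m → ℂ)
    (Λ : Fin n → Finset (ℤ × ℤ × ℤ)) (Ω : Fin m → Finset (ℤ × ℤ × ℤ))
    (v : Fin n → ℂ) (w : Fin m → ℂ) : ℂ :=
  ((∏ p ∈ Finset.univ.filter (fun p : Fin n × Fin n => p.1 < p.2),
      eFun q1 q2 q3 (K p.1) (K p.2) (Λ p.1) (Λ p.2) (v p.2 / v p.1)) *
    (∏ p ∈ Finset.univ.filter (fun p : Fin m × Fin m => p.1 < p.2),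
      eFun q1 q2 q3 (K' p.1) (K' p.2) (Ω p.1) (Ω p.2) (qq ^ 2 * w p.2 / w p.1))) /
  (∏ s : Fin m, ∏ l : Fin n,
      eFun q1 q2 q3 (K' s) (K l) (Ω s) (Λ l) (qq * v l / w s))

lemma eSummand_shift (q1 q2 q3 K K' : ℂ) (P Λ : Finset (ℤ×ℤ×ℤ)) (y : ℂ) (r : ℕ) :
    eSummand q1 q2 q3 K K' P Λ (q3 * y) r
      = eSummand q1 q2 q3 K K' P Λ y r + rtSummand q1 q2 q3 K K' P Λ y⁻¹ r := by
  simp only [eSummand, rtSummand, kap, inv_inv, mul_pow]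
  ring

lemma eFun_shift (q1 q2 q3 K K' : ℂ) (P Λ : Finset (ℤ×ℤ×ℤ)) (y : ℂ)
    (h1 : Summable fun r => ‖eSummand q1 q2 q3 K K' P Λ y r‖)
    (h2 : Summable fun r => ‖eSummand q1 q2 q3 K K' P Λ (q3*y) r‖) :
    eFun q1 q2 q3 K K' P Λ (q3 * y)
      = rTil q1 q2 q3 K K' P Λ y⁻¹ * eFun q1 q2 q3 K K' P Λ y := by
  have hs1 : Summable (fun r => eSummand q1 q2 q3 K K' P Λ y r) := h1.of_norm
  have hs2 : Summable (fun r => eSummand q1 q2 q3 K K' P Λ (q3*y) r) := h2.of_norm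
  have hrt : Summable (fun r => rtSummand q1 q2 q3 K K' P Λ y⁻¹ r) := by
    have h := hs2.sub hs1
    simpa [eSummand_shift] using h
  rw [eFun, eFun, rTil, ← Complex.exp_add]
  congr 1
  rw [← Summable.tsum_add hrt hs1]
  exact tsum_congr fun r => by rw [eSummand_shift]; ring
lemma eFun_ne (q1 q2 q3 K K' : ℂ) (P Λ : Finset (ℤ×ℤ×ℤ)) (y : ℂ) :
    eFun q1 q2 q3 K K' P Λ y ≠ 0 := Complex.exp_ne_zero _

lemma rTil_ne (q1 q2 q3 K K' : ℂ) (P Λ : Finset (ℤ×ℤ×ℤ)) (z : ℂ) :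
    rTil q1 q2 q3 K K' P Λ z ≠ 0 := Complex.exp_ne_zero _

/-- the series part of the MacMahon KZ equation in the variable `v_i`:
the factorized correlation function of MacMahon intertwiners solves the generalized quantum
KZ equation with shift parameter `p = 𝔮^{-2}`. -/
theorem macmahon_qKZ_solution
    (q1 q2 q3 : ℂ) (hq1 : q1 ≠ 0) (hq2 : q2 ≠ 0) (hq3 : q3 ≠ 0)
    (hq : q1 * q2 * q3 = 1)
    (qq : ℂ) (hqq0 : qq ≠ 0) (hqq : qq ^ 2 = q3)
    {n m : ℕ}
    (K : Fin n → ℂ) (K' : Fin m → ℂ) (hK : ∀ i, K i ≠ 0) (hK' : ∀ j, K' j ≠ 0)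
    (Λ : Fin n → Finset (ℤ × ℤ × ℤ)) (Ω : Fin m → Finset (ℤ × ℤ × ℤ))
    (v : Fin n → ℂ) (w : Fin m → ℂ) (hv : ∀ i, v i ≠ 0) (hw : ∀ j, w j ≠ 0)
    (i : Fin n)
    (v' : Fin n → ℂ) (hv' : v' = Function.update v i (qq ^ (-2 : ℤ) * v i))
    (hE1 : ∀ j l : Fin n, j < l → Summable (fun r : ℕ =>
      ‖eSummand q1 q2 q3 (K j) (K l) (Λ j) (Λ l) (v l / v j) r‖))
    (hE1' : ∀ j l : Fin n, j < l → Summable (fun r : ℕ =>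
      ‖eSummand q1 q2 q3 (K j) (K l) (Λ j) (Λ l) (v' l / v' j) r‖))
    (hE2 : ∀ j l : Fin m, j < l → Summable (fun r : ℕ =>
      ‖eSummand q1 q2 q3 (K' j) (K' l) (Ω j) (Ω l) (qq ^ 2 * w l / w j) r‖))
    (hE3 : ∀ s : Fin m, ∀ l : Fin n, Summable (fun r : ℕ =>
      ‖eSummand q1 q2 q3 (K' s) (K l) (Ω s) (Λ l) (qq * v l / w s) r‖))
    (hE3' : ∀ s : Fin m, ∀ l : Fin n, Summable (fun r : ℕ =>
      ‖eSummand q1 q2 q3 (K' s) (K l) (Ω s) (Λ l) (qq * v' l / w s) r‖))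
    (hR1 : ∀ l : Fin n, i < l → Summable (fun r : ℕ =>
      ‖rtSummand q1 q2 q3 (K i) (K l) (Λ i) (Λ l) (v i / v l) r‖))
    (hR2 : ∀ k : Fin n, k < i → Summable (fun r : ℕ =>
      ‖rtSummand q1 q2 q3 (K k) (K i) (Λ k) (Λ i) (qq ^ 2 * v k / v i) r‖))
    (hR3 : ∀ s : Fin m, Summable (fun r : ℕ =>
      ‖rtSummand q1 q2 q3 (K' s) (K i) (Ω s) (Λ i) (qq * w s / v i) r‖)) :
    corrGM q1 q2 q3 qq K K' Λ Ω v' w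
      = ((∏ l ∈ Finset.univ.filter (fun l : Fin n => i < l),
            rTil q1 q2 q3 (K i) (K l) (Λ i) (Λ l) (v i / v l)) *
          (∏ k ∈ Finset.univ.filter (fun k : Fin n => k < i),
            (rTil q1 q2 q3 (K k) (K i) (Λ k) (Λ i) (qq ^ 2 * v k / v i))⁻¹) *
          (∏ s : Fin m,
            rTil q1 q2 q3 (K' s) (K i) (Ω s) (Λ i) (qq * w s / v i))) *
        corrGM q1 q2 q3 qq K K' Λ Ω v w := by
  classical
  -- values of v'
  have hvi' : v' i = q3⁻¹ * v i := by
    rw [hv', Function.update_self, zpow_neg, ← hqq]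
    norm_num
  have hvl' : ∀ l : Fin n, l ≠ i → v' l = v l := by
    intro l hl; rw [hv', Function.update_of_ne hl]
  -- local names
  set E : Fin n × Fin n → ℂ := fun p =>
    eFun q1 q2 q3 (K p.1) (K p.2) (Λ p.1) (Λ p.2) (v p.2 / v p.1) with hE
  set E' : Fin n × Fin n → ℂ := fun p =>
    eFun q1 q2 q3 (K p.1) (K p.2) (Λ p.1) (Λ p.2) (v' p.2 / v' p.1) with hE'
  set S : Finset (Fin n × Fin n) :=
    Finset.univ.filter (fun p : Fin n × Fin n => p.1 < p.2) with hS
  set A1 : ℂ := ∏ l ∈ Finset.univ.filter (fun l : Fin n => i < l),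
      rTil q1 q2 q3 (K i) (K l) (Λ i) (Λ l) (v i / v l) with hA1
  set A2 : ℂ := ∏ k ∈ Finset.univ.filter (fun k : Fin n => k < i),
      (rTil q1 q2 q3 (K k) (K i) (Λ k) (Λ i) (qq ^ 2 * v k / v i))⁻¹ with hA2
  set A3 : ℂ := ∏ s : Fin m,
      rTil q1 q2 q3 (K' s) (K i) (Ω s) (Λ i) (qq * w s / v i) with hA3
  -- key factorwise identities
  have key1 : ∀ l : Fin n, i < l → E' (i, l)
      = rTil q1 q2 q3 (K i) (K l) (Λ i) (Λ l) (v i / v l) * E (i, l) := by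
    intro l hl
    have hy : v' l / v' i = q3 * (v l / v i) := by
      rw [hvl' l (ne_of_gt hl), hvi']
      field_simp
    have h2 := hE1' i l hl
    rw [hy] at h2
    have := eFun_shift q1 q2 q3 (K i) (K l) (Λ i) (Λ l) (v l / v i) (hE1 i l hl) h2
    simp only [hE', hE, hy, inv_div] at this ⊢
    exact this
  have key2 : ∀ k : Fin n, k < i → E' (k, i)
      = (rTil q1 q2 q3 (K k) (K i) (Λ k) (Λ i) (qq ^ 2 * v k / v i))⁻¹ * E (k, i) := by
    intro k hk
    have hne : k ≠ i := ne_of_lt hk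
    have hy : v i / v k = q3 * (v' i / v' k) := by
      rw [hvl' k hne, hvi']
      field_simp
    have hz : (v' i / v' k)⁻¹ = qq ^ 2 * v k / v i := by
      rw [hvl' k hne, hvi', hqq]
      field_simp
    have h2 := hE1 k i hk
    rw [hy] at h2
    have := eFun_shift q1 q2 q3 (K k) (K i) (Λ k) (Λ i) (v' i / v' k) (hE1' k i hk) h2
    rw [hz] at this
    simp only [hE', hE]
    rw [eq_inv_mul_iff_mul_eq₀ (rTil_ne _ _ _ _ _ _ _ _), ← this, ← hy]
  have key3 : ∀ s : Fin m,
      eFun q1 q2 q3 (K' s) (K i) (Ω s) (Λ i) (qq * v' i / w s)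
      = (rTil q1 q2 q3 (K' s) (K i) (Ω s) (Λ i) (qq * w s / v i))⁻¹ *
        eFun q1 q2 q3 (K' s) (K i) (Ω s) (Λ i) (qq * v i / w s) := by
    intro s
    have hy : qq * v i / w s = q3 * (qq * v' i / w s) := by
      rw [hvi']
      field_simp
    have hz : (qq * v' i / w s)⁻¹ = qq * w s / v i := by
      rw [hvi', ← hqq, inv_div]
      field_simp
    have h2 := hE3 s i
    rw [hy] at h2
    have := eFun_shift q1 q2 q3 (K' s) (K i) (Ω s) (Λ i) (qq * v' i / w s) (hE3' s i) h2
    rw [hz] at this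
    rw [eq_inv_mul_iff_mul_eq₀ (rTil_ne _ _ _ _ _ _ _ _), ← this, ← hy]
  -- the first product
  have hP1 : ∏ p ∈ S, E' p = A1 * A2 * ∏ p ∈ S, E p := by
    have hEne : ∀ p ∈ S, E p ≠ 0 := fun p _ => Complex.exp_ne_zero _
    have step : ∏ p ∈ S, E' p = (∏ p ∈ S, E' p / E p) * ∏ p ∈ S, E p := by
      rw [← Finset.prod_mul_distrib]
      exact Finset.prod_congr rfl fun p hp => (div_mul_cancel₀ _ (hEne p hp)).symm
    rw [step]
    congr 1
    -- split the ratio product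
    rw [← Finset.prod_filter_mul_prod_filter_not S (fun p => p.1 = i) (fun p => E' p / E p),
        ← Finset.prod_filter_mul_prod_filter_not (S.filter (fun p => ¬ p.1 = i))
          (fun p => p.2 = i) (fun p => E' p / E p)]
    have h3 : ∏ p ∈ (S.filter (fun p => ¬ p.1 = i)).filter (fun p => ¬ p.2 = i),
        E' p / E p = 1 := by
      apply Finset.prod_eq_one
      intro p hp
      simp only [Finset.mem_filter, hS, Finset.mem_univ, true_and] at hp
      have : v' p.1 = v p.1 := hvl' _ hp.1.2
      have h2 : v' p.2 = v p.2 := hvl' _ hp.2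
      simp only [hE', hE, this, h2]
      exact div_self (Complex.exp_ne_zero _)
    rw [h3, mul_one]
    have e1 : S.filter (fun p => p.1 = i)
        = (Finset.univ.filter (fun l : Fin n => i < l)).image (fun l => (i, l)) := by
      ext p
      simp only [Finset.mem_filter, hS, Finset.mem_univ, true_and, Finset.mem_image]
      constructor
      · rintro ⟨hlt, hpi⟩
        exact ⟨p.2, hpi ▸ hlt, by rw [← hpi]⟩
      · rintro ⟨l, hl, rfl⟩
        exact ⟨hl, rfl⟩
    have e2 : (S.filter (fun p => ¬ p.1 = i)).filter (fun p => p.2 = i)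
        = (Finset.univ.filter (fun k : Fin n => k < i)).image (fun k => (k, i)) := by
      ext p
      simp only [Finset.mem_filter, hS, Finset.mem_univ, true_and, Finset.mem_image]
      constructor
      · rintro ⟨⟨hlt, _⟩, hpi⟩
        exact ⟨p.1, hpi ▸ hlt, by rw [← hpi]⟩
      · rintro ⟨k, hk, rfl⟩
        exact ⟨⟨hk, ne_of_lt hk⟩, rfl⟩
    rw [e1, e2, Finset.prod_image (by intro a _ b _ h; simpa using h),
        Finset.prod_image (by intro a _ b _ h; simpa using h)]
    congr 1
    · rw [hA1]
      apply Finset.prod_congr rfl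
      intro l hl
      rw [key1 l (Finset.mem_filter.mp hl).2, mul_div_assoc,
          div_self (show E (i, l) ≠ 0 from Complex.exp_ne_zero _), mul_one]
    · rw [hA2]
      apply Finset.prod_congr rfl
      intro k hk
      rw [key2 k (Finset.mem_filter.mp hk).2, mul_div_assoc,
          div_self (show E (k, i) ≠ 0 from Complex.exp_ne_zero _), mul_one]
  -- the denominator
  have hD : (∏ s : Fin m, ∏ l : Fin n,
        eFun q1 q2 q3 (K' s) (K l) (Ω s) (Λ l) (qq * v' l / w s))
      = A3⁻¹ * ∏ s : Fin m, ∏ l : Fin n,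
        eFun q1 q2 q3 (K' s) (K l) (Ω s) (Λ l) (qq * v l / w s) := by
    rw [hA3, ← Finset.prod_inv_distrib, ← Finset.prod_mul_distrib]
    apply Finset.prod_congr rfl
    intro s _
    have : ∀ l : Fin n, eFun q1 q2 q3 (K' s) (K l) (Ω s) (Λ l) (qq * v' l / w s)
        = (if l = i then (rTil q1 q2 q3 (K' s) (K i) (Ω s) (Λ i) (qq * w s / v i))⁻¹ else 1)
          * eFun q1 q2 q3 (K' s) (K l) (Ω s) (Λ l) (qq * v l / w s) := by
      intro l
      by_cases hl : l = i
      · subst hl; simpa using key3 s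
      · rw [hvl' l hl, if_neg hl, one_mul]
    rw [Finset.prod_congr rfl (fun l _ => this l), Finset.prod_mul_distrib]
    congr 1
    simp
  -- assemble
  have hA3ne : A3 ≠ 0 := Finset.prod_ne_zero_iff.mpr fun s _ => Complex.exp_ne_zero _
  have hDne : (∏ s : Fin m, ∏ l : Fin n,
      eFun q1 q2 q3 (K' s) (K l) (Ω s) (Λ l) (qq * v l / w s)) ≠ 0 :=
    Finset.prod_ne_zero_iff.mpr fun s _ =>
      Finset.prod_ne_zero_iff.mpr fun l _ => Complex.exp_ne_zero _
  simp only [corrGM]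
  rw [hP1, hD]
  field_simp
  ring
end
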